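/- arXiv:1903.00245 — 6 statements merged into one kernel-verified Lean document; each statement's English description precedes it below -/
import Mathlib

section
/- Let G be a graph on n vertices with at least c·C(n,2) edges, where c ∈ (0,1). If G does not contain K_{2,2} as an induced subgraph, then G has a complete subgraph on at least (c²/10)·n vertices. -/
/-!
Discard low-degree vertices until every remaining vertex has degree at least `c(n-1)/2` among the
remaining ones, and let `x` be a vertex of minimum degree `D` there, with neighbourhood `A`.
Without an induced `K_{2,2}` the common neighbourhood of two non-adjacent vertices is a clique.
So if cliques have at most `k + 1` vertices, each non-neighbour of `x` sees at most `k` vertices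
of `A`; and a vertex of `A`, having degree at least `D`, has at least as many neighbours outside
`A ∪ {x}` as non-neighbours in `A`. Hence the non-neighbour counts inside `A` add up to at most
`k` per non-neighbour of `x`. Two non-adjacent vertices of `A` miss together at least `#A - k`
vertices of `A`, so the vertices with fewer than `(D - k)/2` non-neighbours in `A` form a clique;
counting the others gives `(D - k)² ≤ 2(n - 1 - D)k`, which fails when `k + 1 < c²n/10`.
-/

open Finset

/-- `G` contains `K_{2,2}` as an induced subgraph: there are four distinct vertices
`x₁, x₂, y₁, y₂` with all cross pairs adjacent and `x₁x₂`, `y₁y₂` non-adjacent. -/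
def HasInducedK22 {V : Type*} (G : SimpleGraph V) : Prop :=
  ∃ x₁ x₂ y₁ y₂ : V,
    x₁ ≠ x₂ ∧ x₁ ≠ y₁ ∧ x₁ ≠ y₂ ∧ x₂ ≠ y₁ ∧ x₂ ≠ y₂ ∧ y₁ ≠ y₂ ∧
    G.Adj x₁ y₁ ∧ G.Adj x₁ y₂ ∧ G.Adj x₂ y₁ ∧ G.Adj x₂ y₂ ∧
    ¬ G.Adj x₁ x₂ ∧ ¬ G.Adj y₁ y₂

namespace SimpleGraph

variable {V : Type*} {G : SimpleGraph V}

theorem isClique_commonNeighbors_of_not_hasInducedK22 (hG : ¬ HasInducedK22 G) {a b : V}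
    (hab : a ≠ b) (hnadj : ¬ G.Adj a b) : G.IsClique (G.commonNeighbors a b) := by
  intro z hz z' hz' hzz'
  by_contra hnadj'
  rw [mem_commonNeighbors] at hz hz'
  exact hG ⟨a, b, z, z', hab, hz.1.ne, hz'.1.ne, hz.2.ne, hz'.2.ne, hzz', hz.1, hz'.1, hz.2, hz'.2,
    hnadj, hnadj'⟩

theorem card_le_cliqueNum_sub_one_of_forall_adj [Finite V] [DecidableEq V] {s : Finset V} {x : V}
    (hs : G.IsClique (s : Set V)) (hsx : ∀ w ∈ s, G.Adj x w) : #s ≤ G.cliqueNum - 1 := by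
  have := IsClique.card_le_cliqueNum (t := insert x s)
    (tc := by rw [coe_insert]; exact hs.insert fun w hw _ ↦ hsx w hw)
  rw [card_insert_of_notMem fun hx ↦ G.irrefl (hsx x hx)] at this
  omega

variable [DecidableRel G.Adj]

theorem sum_card_filter_adj_eq_two_mul_card_edgeFinset [Fintype V] [Fintype G.edgeSet] :
    ∑ u, #{w | G.Adj u w} = 2 * #G.edgeFinset := by
  classical
  convert G.sum_degrees_eq_twice_card_edges using 3 with u
  · rw [← card_neighborFinset_eq_degree, neighborFinset_eq_filter]
  · congr!

theorem card_filter_adj_and_adj_le {x : V} {k : ℕ} {A : Finset V} (hG : ¬ HasInducedK22 G)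
    (hk : ∀ s : Finset V, G.IsClique (s : Set V) → (∀ w ∈ s, G.Adj x w) → #s ≤ k)
    (hA : ∀ w ∈ A, G.Adj x w) {a b : V} (hab : a ≠ b) (hnadj : ¬ G.Adj a b) :
    #{w ∈ A | G.Adj a w ∧ G.Adj b w} ≤ k := by
  refine hk _ ((isClique_commonNeighbors_of_not_hasInducedK22 hG hab hnadj).subset ?_)
    fun w hw ↦ hA w (mem_filter.1 hw).1
  intro w hw
  exact G.mem_commonNeighbors.2 (mem_filter.1 hw).2

variable [DecidableEq V]

theorem sum_card_filter_adj_insert {s : Finset V} {v : V} (hv : v ∉ s) :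
    ∑ u ∈ insert v s, #{w ∈ insert v s | G.Adj u w}
      = ∑ u ∈ s, #{w ∈ s | G.Adj u w} + 2 * #{w ∈ s | G.Adj v w} := by
  simp only [card_filter, sum_insert hv, sum_add_distrib, G.irrefl, if_false, G.adj_comm _ v]
  ring

theorem exists_subset_forall_le_card_filter_adj {δ : ℝ} (s : Finset V) (hs : s.Nonempty)
    (hsum : 2 * δ * #s ≤ ∑ u ∈ s, (#{w ∈ s | G.Adj u w} : ℝ)) :
    ∃ t ⊆ s, t.Nonempty ∧ ∀ u ∈ t, δ ≤ #{w ∈ t | G.Adj u w} := by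
  induction s using Finset.strongInduction with
  | H s ih =>
    by_cases hmin : ∀ u ∈ s, δ ≤ #{w ∈ s | G.Adj u w}
    · exact ⟨s, subset_rfl, hs, hmin⟩
    push Not at hmin
    obtain ⟨v, hv, hvδ⟩ := hmin
    have hdeg : #{w ∈ s.erase v | G.Adj v w} = #{w ∈ s | G.Adj v w} := by
      rw [filter_erase, erase_eq_of_notMem (by simp)]
    have hsum' : 2 * δ * #(s.erase v) < ∑ u ∈ s.erase v, (#{w ∈ s.erase v | G.Adj u w} : ℝ) := by
      have h := G.sum_card_filter_adj_insert (notMem_erase v s)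
      rw [insert_erase hv, hdeg] at h
      have h' : ∑ u ∈ s, (#{w ∈ s | G.Adj u w} : ℝ)
          = ∑ u ∈ s.erase v, (#{w ∈ s.erase v | G.Adj u w} : ℝ) + 2 * #{w ∈ s | G.Adj v w} := by
        exact_mod_cast h
      rw [card_erase_of_mem hv, Nat.cast_sub (card_pos.2 hs)]
      push_cast
      linarith
    have hne : (s.erase v).Nonempty := by
      by_contra hempty
      rw [not_nonempty_iff_eq_empty.1 hempty] at hsum'
      simp at hsum'
    obtain ⟨t, hts, ht, hmin⟩ := ih _ (erase_ssubset hv) hne hsum'.le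
    exact ⟨t, hts.trans (erase_subset v s), ht, hmin⟩

theorem card_filter_adj_add_card_filter_compl_adj {A : Finset V} {u : V} (hu : u ∈ A) :
    #{w ∈ A | G.Adj u w} + #{w ∈ A | Gᶜ.Adj u w} + 1 = #A := by
  have hnot : {w ∈ A | ¬ G.Adj u w} = insert u {w ∈ A | Gᶜ.Adj u w} := by
    ext w
    rcases eq_or_ne w u with rfl | hw
    · simp [hu]
    · simp [compl_adj, hw, hw.symm]
  rw [← card_filter_add_card_filter_not (s := A) (G.Adj u), hnot,
    card_insert_of_notMem (by simp)]
  ring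

theorem card_filter_compl_adj_le_card_filter_adj {T A B : Finset V} {x u : V}
    (hT : T ⊆ insert x (A ∪ B)) (hu : u ∈ A) (hmin : #A ≤ #{w ∈ T | G.Adj u w}) :
    #{w ∈ A | Gᶜ.Adj u w} ≤ #{w ∈ B | G.Adj u w} := by
  have hsub : {w ∈ T | G.Adj u w} ⊆ insert x ({w ∈ A | G.Adj u w} ∪ {w ∈ B | G.Adj u w}) := by
    intro w hw
    rw [mem_filter] at hw
    have := hT hw.1
    simp only [mem_insert, mem_union, mem_filter] at this ⊢
    tauto
  have := card_le_card hsub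
  have := card_insert_le x ({w ∈ A | G.Adj u w} ∪ {w ∈ B | G.Adj u w})
  have := card_union_le {w ∈ A | G.Adj u w} {w ∈ B | G.Adj u w}
  have := card_filter_adj_add_card_filter_compl_adj (G := G) hu
  omega

section

variable {x : V} {k : ℕ} (hG : ¬ HasInducedK22 G)
  (hk : ∀ s : Finset V, G.IsClique (s : Set V) → (∀ w ∈ s, G.Adj x w) → #s ≤ k)
include hG hk

section

variable {A : Finset V} (hA : ∀ w ∈ A, G.Adj x w)
include hA

theorem card_le_add_card_filter_compl_adj_add {a b : V} (ha : a ∈ A) (hb : b ∈ A) (hab : a ≠ b)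
    (hnadj : ¬ G.Adj a b) :
    #A ≤ k + #{w ∈ A | Gᶜ.Adj a w} + #{w ∈ A | Gᶜ.Adj b w} := by
  have hcover : A ⊆ {w ∈ A | G.Adj a w ∧ G.Adj b w} ∪ {w ∈ A | Gᶜ.Adj a w} ∪
      {w ∈ A | Gᶜ.Adj b w} := by
    intro w hw
    have hba : ¬ G.Adj b a := fun h ↦ hnadj h.symm
    simp only [mem_union, mem_filter, compl_adj, hw, true_and]
    by_cases hwa : w = a
    · subst hwa; tauto
    by_cases hwb : w = b
    · subst hwb; tauto
    tauto
  have hcommon := card_filter_adj_and_adj_le hG hk hA hab hnadj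
  have hunion₁ := card_union_le ({w ∈ A | G.Adj a w ∧ G.Adj b w} ∪ {w ∈ A | Gᶜ.Adj a w})
    {w ∈ A | Gᶜ.Adj b w}
  have hunion₂ := card_union_le {w ∈ A | G.Adj a w ∧ G.Adj b w} {w ∈ A | Gᶜ.Adj a w}
  have := card_le_card hcover
  omega

theorem card_filter_two_mul_card_filter_compl_adj_add_lt_le :
    #{u ∈ A | 2 * #{w ∈ A | Gᶜ.Adj u w} + k < #A} ≤ k := by
  refine hk _ ?_ fun u hu ↦ hA u (mem_filter.1 hu).1
  intro a ha b hb hab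
  by_contra hnadj
  simp only [coe_filter, Set.mem_ofPred_eq] at ha hb
  have := card_le_add_card_filter_compl_adj_add hG hk hA ha.1 hb.1 hab hnadj
  omega

theorem sq_sub_le_two_mul_sum_card_filter_compl_adj :
    (#A - k) ^ 2 ≤ 2 * ∑ u ∈ A, #{w ∈ A | Gᶜ.Adj u w} := by
  have hsmall := card_filter_two_mul_card_filter_compl_adj_add_lt_le hG hk hA
  have hsplit := card_filter_add_card_filter_not (s := A)
    (fun u ↦ 2 * #{w ∈ A | Gᶜ.Adj u w} + k < #A)
  calc (#A - k) ^ 2 ≤ #{u ∈ A | ¬ 2 * #{w ∈ A | Gᶜ.Adj u w} + k < #A} * (#A - k) := by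
        rw [sq]; gcongr; omega
    _ ≤ ∑ u ∈ A with ¬ 2 * #{w ∈ A | Gᶜ.Adj u w} + k < #A, 2 * #{w ∈ A | Gᶜ.Adj u w} := by
        rw [← smul_eq_mul]
        exact card_nsmul_le_sum _ _ _ fun u hu ↦ by have := (mem_filter.1 hu).2; omega
    _ ≤ ∑ u ∈ A, 2 * #{w ∈ A | Gᶜ.Adj u w} := sum_le_sum_of_subset (filter_subset _ _)
    _ = 2 * ∑ u ∈ A, #{w ∈ A | Gᶜ.Adj u w} := (mul_sum _ _ _).symm

end

theorem sq_card_filter_adj_sub_le {T : Finset V}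
    (hmin : ∀ u ∈ T, #{w ∈ T | G.Adj x w} ≤ #{w ∈ T | G.Adj u w}) :
    (#{w ∈ T | G.Adj x w} - k) ^ 2 ≤ 2 * (#{w ∈ T | Gᶜ.Adj x w} * k) := by
  set A := {w ∈ T | G.Adj x w}
  set B := {w ∈ T | Gᶜ.Adj x w}
  have hA : ∀ w ∈ A, G.Adj x w := fun w hw ↦ (mem_filter.1 hw).2
  have hT : T ⊆ insert x (A ∪ B) := by
    intro w hw
    simp only [A, B, mem_insert, mem_union, mem_filter, compl_adj, hw, true_and]
    tauto
  have hB : ∀ y ∈ B, #{u ∈ A | G.Adj u y} ≤ k := by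
    intro y hy
    obtain ⟨hxy, hnadj⟩ := (G.compl_adj x y).1 (mem_filter.1 hy).2
    refine le_trans (card_le_card fun u hu ↦ ?_) (card_filter_adj_and_adj_le hG hk hA hxy hnadj)
    rw [mem_filter] at hu ⊢
    exact ⟨hu.1, hA u hu.1, hu.2.symm⟩
  calc (#A - k) ^ 2 ≤ 2 * ∑ u ∈ A, #{w ∈ A | Gᶜ.Adj u w} :=
        sq_sub_le_two_mul_sum_card_filter_compl_adj hG hk hA
    _ ≤ 2 * ∑ u ∈ A, #{w ∈ B | G.Adj u w} := by
        gcongr 2 * ?_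
        exact sum_le_sum fun u hu ↦
          card_filter_compl_adj_le_card_filter_adj hT hu (hmin u (mem_filter.1 hu).1)
    _ = 2 * ∑ y ∈ B, #{u ∈ A | G.Adj u y} := by
        congr 1
        exact sum_card_bipartiteAbove_eq_sum_card_bipartiteBelow G.Adj
    _ ≤ 2 * (#B * k) := by
        gcongr
        simpa using sum_le_card_nsmul B _ k hB

end

end SimpleGraph

theorem two_mul_mul_lt_sq_sub {c : ℝ} {n D B k : ℕ} (hc0 : 0 < c) (hc1 : c < 1)
    (hn : B + D + 1 ≤ n) (hD : c * (n - 1) / 2 ≤ D) (hk : (k + 1 : ℝ) < c ^ 2 * n / 10) :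
    2 * (B * k) < (D - k) ^ 2 := by
  have hc2 : c ^ 2 < 1 := by nlinarith
  have hn1 : (1 : ℝ) ≤ n := by exact_mod_cast le_of_add_le_right hn
  have hkD : (k : ℝ) ≤ D := by nlinarith
  have hnBD : (B : ℝ) + D + 1 ≤ n := by exact_mod_cast hn
  rw [← Nat.cast_lt (α := ℝ)]
  push_cast [Nat.cast_sub (show k ≤ D by exact_mod_cast hkD)]
  have hD0 : 0 ≤ c * (n - 1) / 2 := by have := sub_nonneg.2 hn1; positivity
  have hD2 : c ^ 2 * (n - 1) ^ 2 / 4 ≤ (D : ℝ) ^ 2 := by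
    nlinarith [mul_le_mul hD hD hD0 (hD0.trans hD)]
  nlinarith [mul_le_mul_of_nonneg_right hnBD (Nat.cast_nonneg (α := ℝ) k),
    mul_le_mul_of_nonneg_left hk.le (sub_nonneg.2 hn1), mul_nonneg (sub_nonneg.2 hn1) (sq_nonneg c)]

theorem gyarfas_hubenko_solymosi (n : ℕ) (c : ℝ) (hc : c ∈ Set.Ioo (0 : ℝ) 1)
    (G : SimpleGraph (Fin n)) [Fintype G.edgeSet]
    (hedges : c * (n.choose 2 : ℝ) ≤ (G.edgeFinset.card : ℝ))
    (hK22 : ¬ HasInducedK22 G) :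
    ∃ S : Finset (Fin n), G.IsClique (S : Set (Fin n)) ∧
      (c ^ 2 / 10) * (n : ℝ) ≤ (S.card : ℝ) := by
  classical
  obtain ⟨hc0, hc1⟩ := hc
  obtain ⟨S, hS⟩ := G.exists_isNClique_cliqueNum
  refine ⟨S, hS.isClique, ?_⟩
  rw [hS.card_eq]
  by_contra! hω
  have hn : 0 < n := Nat.pos_of_ne_zero fun hn ↦ by
    subst hn; exact (Nat.cast_nonneg _).not_gt (by simpa using hω)
  have hω1 : 1 ≤ G.cliqueNum :=
    SimpleGraph.IsClique.card_le_cliqueNum (t := {⟨0, hn⟩}) (tc := by simp)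
  have hdeg : 2 * (c * (n - 1) / 2) * #(univ : Finset (Fin n))
      ≤ ∑ u ∈ univ, (#{w ∈ univ | G.Adj u w} : ℝ) := by
    rw [card_univ, Fintype.card_fin, ← Nat.cast_sum,
      G.sum_card_filter_adj_eq_two_mul_card_edgeFinset]
    rw [Nat.cast_choose_two] at hedges
    push_cast
    linarith
  obtain ⟨T, -, hT, hTmin⟩ := G.exists_subset_forall_le_card_filter_adj univ
    (univ_nonempty_iff.2 ⟨⟨0, hn⟩⟩) hdeg
  obtain ⟨x, hx, hxmin⟩ := T.exists_min_image (fun u ↦ #{w ∈ T | G.Adj u w}) hT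
  have hsq := SimpleGraph.sq_card_filter_adj_sub_le hK22
    (fun s hs hsx ↦ SimpleGraph.card_le_cliqueNum_sub_one_of_forall_adj hs hsx) hxmin
  have hcard := SimpleGraph.card_filter_adj_add_card_filter_compl_adj (G := G) hx
  have hTn : #T ≤ n := (card_le_univ T).trans_eq (Fintype.card_fin n)
  have hk : ((G.cliqueNum - 1 : ℕ) + 1 : ℝ) < c ^ 2 * n / 10 := by
    rw [← Nat.cast_add_one, Nat.sub_add_cancel hω1]; linarith
  exact (two_mul_mul_lt_sq_sub hc0 hc1 (by omega) (hTmin x hx) hk).not_ge hsq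
end

section
/- Let G be a graph on n vertices with at least α·C(n,2) edges, where α ∈ (0,1). If G does not contain K_{2,2} as an induced subgraph, then ω(G) ≥ (1 − √(1−α))²·n. -/
open Finset

/-!
Let `P` be the number of ordered pairs of distinct non-adjacent vertices. We show
`(N - √P)² ≤ ω N` for every induced-`K_{2,2}`-free graph on `N` vertices, by induction on `N`.
Without an induced `K_{2,2}`, the common neighbourhood of a non-adjacent pair is a clique, so
summing the analogous counts `P(v)` of the neighbourhoods gives `∑ P(v) ≤ P (ω - 1)`. Averaging,
with `r = √P`, some vertex has `N ((N - r) r deg v - N P(v)) ≥ (N - r) r ∑ deg - N ∑ P(v)`;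
the induction hypothesis for its neighbourhood gives `ω ≥ 1 + deg v - 2 √P(v)`, and AM-GM on
`2 N (N - r) r √P(v)` turns the two bounds into `ω N ≥ (N - r)² + r`. The theorem follows because
`α C(n,2)` edges leave `P ≤ (1 - α) n²`.
-/

theorem HasInducedK22.map {V W : Type*} {H : SimpleGraph V} {G : SimpleGraph W} (f : H ↪g G)
    (h : HasInducedK22 H) : HasInducedK22 G := by
  obtain ⟨x₁, x₂, y₁, y₂, h₁, h₂, h₃, h₄, h₅, h₆, a₁, a₂, a₃, a₄, n₁, n₂⟩ := h
  exact ⟨f x₁, f x₂, f y₁, f y₂, f.injective.ne h₁, f.injective.ne h₂, f.injective.ne h₃,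
    f.injective.ne h₄, f.injective.ne h₅, f.injective.ne h₆, f.map_adj_iff.2 a₁,
    f.map_adj_iff.2 a₂, f.map_adj_iff.2 a₃, f.map_adj_iff.2 a₄, mt f.map_adj_iff.1 n₁,
    mt f.map_adj_iff.1 n₂⟩

/-- The inductive step in numbers: `r² = P`, while `d`, `s²` and `K'` are the degree of the chosen
vertex, the count `P(v)` and the clique number of its neighbourhood. -/
theorem sq_sub_le_mul_of_average_le {N r K K' d s : ℝ} (hr : 0 < r) (hrN : r < N)
    (hs : 0 ≤ s) (hd : 0 ≤ d) (hK' : 0 ≤ K') (hKK' : K' + 1 ≤ K)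
    (hsq : (d - s) ^ 2 ≤ K' * d)
    (havg : (N - r) * r * (N ^ 2 - N - r ^ 2) - N * r ^ 2 * (K - 1)
      ≤ N * ((N - r) * r * d - N * s ^ 2)) :
    (N - r) ^ 2 ≤ K * N := by
  have hd2s : d - 2 * s ≤ K' := by
    rcases hd.eq_or_lt with rfl | hd
    · linarith
    · nlinarith [sq_nonneg s]
  have hAr : 0 ≤ N * (N - r) * r :=
    mul_nonneg (mul_nonneg (hr.trans hrN).le (sub_pos.2 hrN).le) hr.le
  have hamgm : 2 * (N * (N - r) * r) * s ≤ N ^ 2 * s ^ 2 + ((N - r) * r) ^ 2 := by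
    nlinarith [sq_nonneg (N * s - (N - r) * r)]
  have hmain : 0 ≤ r * N * (N * K - r - (N - r) ^ 2) := by
    nlinarith [mul_le_mul_of_nonneg_left (show 1 + d - 2 * s ≤ K by linarith) hAr]
  have := (mul_nonneg_iff_of_pos_left (mul_pos hr (hr.trans hrN))).1 hmain
  linarith

namespace SimpleGraph

section

variable {V : Type*} {G : SimpleGraph V}

theorem isClique_commonNeighbors (h : ¬HasInducedK22 G) {u w : V}
    (huw : Gᶜ.Adj u w) : G.IsClique (G.commonNeighbors u w) := by
  intro a ha b hb hab
  rw [mem_commonNeighbors] at ha hb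
  by_contra hnab
  exact h ⟨a, b, u, w, hab, (G.ne_of_adj ha.1).symm, (G.ne_of_adj ha.2).symm,
    (G.ne_of_adj hb.1).symm, (G.ne_of_adj hb.2).symm, huw.ne, ha.1.symm, ha.2.symm, hb.1.symm,
    hb.2.symm, hnab, (compl_adj G u w).1 huw |>.2⟩

end

variable {V : Type*} [Fintype V] (G : SimpleGraph V)

open scoped Classical in
noncomputable def nonAdjPairs : Finset (V × V) := {p | Gᶜ.Adj p.1 p.2}

variable {G}

@[simp]
theorem mem_nonAdjPairs {p : V × V} : p ∈ G.nonAdjPairs ↔ Gᶜ.Adj p.1 p.2 := by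
  simp [nonAdjPairs]

variable (G)

theorem card_nonAdjPairs_eq_sum_degree_compl [DecidableEq V] [DecidableRel G.Adj] :
    #G.nonAdjPairs = ∑ v, Gᶜ.degree v := by
  simp only [nonAdjPairs, card_filter, Fintype.sum_prod_type, ← card_neighborFinset_eq_degree,
    neighborFinset_eq_filter]
  congr!

theorem card_nonAdjPairs_add_sum_degree [DecidableRel G.Adj] :
    #G.nonAdjPairs + ∑ v, G.degree v + Fintype.card V = Fintype.card V * Fintype.card V := by
  classical
  have hv (v : V) : Gᶜ.degree v + G.degree v + 1 = Fintype.card V := by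
    have := G.degree_lt_card_verts v
    rw [degree_compl]; omega
  calc #G.nonAdjPairs + ∑ v, G.degree v + Fintype.card V
      = ∑ v, (Gᶜ.degree v + G.degree v + 1) := by
        simp [card_nonAdjPairs_eq_sum_degree_compl, sum_add_distrib]
    _ = Fintype.card V * Fintype.card V := by simp [hv]

theorem card_nonAdjPairs_add_two_mul_card_edgeFinset [Fintype G.edgeSet] :
    #G.nonAdjPairs + 2 * #G.edgeFinset + Fintype.card V = Fintype.card V * Fintype.card V := by
  classical
  convert G.card_nonAdjPairs_add_sum_degree using 3
  convert (G.sum_degrees_eq_twice_card_edges).symm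

theorem card_commonNeighbors_add_one_le_cliqueNum [DecidableRel G.Adj] (h : ¬HasInducedK22 G)
    {u w : V} (huw : Gᶜ.Adj u w) : #{v | G.Adj v u ∧ G.Adj v w} + 1 ≤ G.cliqueNum := by
  classical
  set t : Finset V := {v | G.Adj v u ∧ G.Adj v w}
  have hu : u ∉ t := by simp [t]
  have hclique : G.IsClique (insert u t : Finset V) := by
    rw [coe_insert]
    refine IsClique.insert ((isClique_commonNeighbors h huw).subset ?_) ?_
    · intro v hv
      simp_all [t, adj_comm, mem_commonNeighbors]
    · intro v hv _
      simp_all [t, adj_comm]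
  simpa [card_insert_of_notMem hu] using hclique.card_le_cliqueNum

theorem cliqueNum_induce_neighborSet_add_one_le (v : V) :
    (G.induce (G.neighborSet v)).cliqueNum + 1 ≤ G.cliqueNum := by
  classical
  obtain ⟨s, hs⟩ := (G.induce (G.neighborSet v)).exists_isNClique_cliqueNum
  have hclique : G.IsNClique ((G.induce (G.neighborSet v)).cliqueNum + 1)
      (insert v (s.map (Function.Embedding.subtype _))) := by
    refine ((hs.map (f := Function.Embedding.subtype _)).mono (map_comap_le _ G)).insert ?_
    simp +contextual
  exact hclique.card_eq ▸ hclique.isClique.card_le_cliqueNum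

theorem card_nonAdjPairs_induce (s : Set V) [Fintype s] [DecidablePred (· ∈ s)] :
    #(G.induce s).nonAdjPairs = #{p ∈ G.nonAdjPairs | p.1 ∈ s ∧ p.2 ∈ s} := by
  rw [← card_map ((Function.Embedding.subtype _).prodMap (Function.Embedding.subtype _))]
  congr 1
  ext ⟨a, b⟩
  simp only [mem_map, mem_filter, mem_nonAdjPairs, compl_adj]
  aesop

theorem sum_card_nonAdjPairs_induce_neighborSet_add_le [DecidableRel G.Adj]
    (h : ¬HasInducedK22 G) :
    ∑ v, #(G.induce (G.neighborSet v)).nonAdjPairs + #G.nonAdjPairs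
      ≤ #G.nonAdjPairs * G.cliqueNum := by
  classical
  calc ∑ v, #(G.induce (G.neighborSet v)).nonAdjPairs + #G.nonAdjPairs
      = ∑ v, #(G.nonAdjPairs.bipartiteAbove (fun v p => G.Adj v p.1 ∧ G.Adj v p.2) v)
          + #G.nonAdjPairs := by
        simp [card_nonAdjPairs_induce, bipartiteAbove]
    _ = ∑ p ∈ G.nonAdjPairs, (#{v | G.Adj v p.1 ∧ G.Adj v p.2} + 1) := by
        rw [sum_card_bipartiteAbove_eq_sum_card_bipartiteBelow, sum_add_distrib, card_eq_sum_ones]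
        rfl
    _ ≤ ∑ _p ∈ G.nonAdjPairs, G.cliqueNum :=
        sum_le_sum fun p hp => G.card_commonNeighbors_add_one_le_cliqueNum h (mem_nonAdjPairs.1 hp)
    _ = #G.nonAdjPairs * G.cliqueNum := by rw [sum_const, smul_eq_mul]

theorem card_le_cliqueNum_of_card_nonAdjPairs_eq_zero (h : #G.nonAdjPairs = 0) :
    Fintype.card V ≤ G.cliqueNum := by
  have hclique : G.IsClique ((univ : Finset V) : Set V) := fun u _ w _ huw => by
    by_contra hadj
    exact notMem_empty (u, w) (card_eq_zero.1 h ▸ mem_nonAdjPairs.2 ⟨huw, hadj⟩)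
  simpa using hclique.card_le_cliqueNum

theorem exists_vertex_le_card_mul [DecidableRel G.Adj] [Nonempty V] (h : ¬HasInducedK22 G)
    (a : ℝ) {b : ℝ} (hb : 0 ≤ b) :
    ∃ v, a * ((Fintype.card V : ℝ) ^ 2 - Fintype.card V - #G.nonAdjPairs)
        - b * #G.nonAdjPairs * (G.cliqueNum - 1)
      ≤ Fintype.card V * (a * G.degree v - b * #(G.induce (G.neighborSet v)).nonAdjPairs) := by
  set f : V → ℝ := fun v => a * G.degree v - b * #(G.induce (G.neighborSet v)).nonAdjPairs
  obtain ⟨v, -, hv⟩ := exists_max_image univ f univ_nonempty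
  have hdeg : ∑ v, (G.degree v : ℝ)
      = (Fintype.card V : ℝ) ^ 2 - Fintype.card V - #G.nonAdjPairs := by
    have := congrArg (Nat.cast (R := ℝ)) G.card_nonAdjPairs_add_sum_degree
    push_cast at this
    linarith
  have hpairs : ∑ v, (#(G.induce (G.neighborSet v)).nonAdjPairs : ℝ)
      ≤ #G.nonAdjPairs * (G.cliqueNum - 1) := by
    rw [mul_sub_one, le_sub_iff_add_le]
    exact_mod_cast G.sum_card_nonAdjPairs_induce_neighborSet_add_le h
  refine ⟨v, ?_⟩
  calc a * ((Fintype.card V : ℝ) ^ 2 - Fintype.card V - #G.nonAdjPairs)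
        - b * #G.nonAdjPairs * (G.cliqueNum - 1)
      ≤ ∑ w, f w := by
        simp only [f, sum_sub_distrib, ← mul_sum, hdeg, mul_assoc]
        gcongr
    _ ≤ Fintype.card V * f v := by
        simpa using sum_le_card_nsmul univ f (f v) fun w _ => hv w (mem_univ w)

theorem sq_card_sub_sqrt_card_nonAdjPairs_le (h : ¬HasInducedK22 G) :
    ((Fintype.card V : ℝ) - √(#G.nonAdjPairs : ℝ)) ^ 2 ≤ G.cliqueNum * Fintype.card V := by
  classical
  induction hN : Fintype.card V using Nat.strong_induction_on generalizing V with
  | _ N ih =>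
  rcases (#G.nonAdjPairs).eq_zero_or_pos with hP | hP
  · have hK : (N : ℝ) ≤ G.cliqueNum := by
      exact_mod_cast hN ▸ G.card_le_cliqueNum_of_card_nonAdjPairs_eq_zero hP
    rw [hP, Nat.cast_zero, Real.sqrt_zero, sub_zero, sq]
    exact mul_le_mul_of_nonneg_right hK (Nat.cast_nonneg N)
  have hcount := hN ▸ G.card_nonAdjPairs_add_sum_degree
  have hNpos : 0 < N := Nat.pos_of_ne_zero fun hN0 => by subst hN0; omega
  have : Nonempty V := Fintype.card_pos_iff.1 (hN ▸ hNpos)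
  have hr : 0 < √(#G.nonAdjPairs : ℝ) := Real.sqrt_pos.2 (by exact_mod_cast hP)
  have hrN : √(#G.nonAdjPairs : ℝ) < N := by
    rw [Real.sqrt_lt' (by exact_mod_cast hNpos), sq]
    exact_mod_cast (by omega : #G.nonAdjPairs < N * N)
  obtain ⟨v, hv⟩ := G.exists_vertex_le_card_mul h
    ((N - √(#G.nonAdjPairs : ℝ)) * √(#G.nonAdjPairs : ℝ)) (Nat.cast_nonneg (α := ℝ) N)
  have hIH := ih (G.degree v) (hN ▸ G.degree_lt_card_verts v) (G := G.induce (G.neighborSet v))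
    (fun hK => h (hK.map (Embedding.induce _))) (G.card_neighborSet_eq_degree v)
  refine sq_sub_le_mul_of_average_le hr hrN (Real.sqrt_nonneg _) (Nat.cast_nonneg _)
    (Nat.cast_nonneg _) (by exact_mod_cast G.cliqueNum_induce_neighborSet_add_one_le v) hIH ?_
  rw [Real.sq_sqrt (Nat.cast_nonneg _), Real.sq_sqrt (Nat.cast_nonneg _)]
  simpa [hN] using hv

end SimpleGraph

theorem improved_ghs (n : ℕ) (α : ℝ) (hα : α ∈ Set.Ioo (0 : ℝ) 1)
    (G : SimpleGraph (Fin n)) [Fintype G.edgeSet]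
    (hedges : α * (n.choose 2 : ℝ) ≤ (G.edgeFinset.card : ℝ))
    (hK22 : ¬ HasInducedK22 G) :
    (1 - Real.sqrt (1 - α)) ^ 2 * (n : ℝ) ≤ (G.cliqueNum : ℝ) := by
  obtain ⟨hα₀, hα₁⟩ := hα
  rcases n.eq_zero_or_pos with rfl | hn
  · simp
  have hcount := congrArg (Nat.cast (R := ℝ)) G.card_nonAdjPairs_add_two_mul_card_edgeFinset
  rw [Fintype.card_fin] at hcount
  push_cast at hcount
  rw [Nat.cast_choose_two] at hedges
  have hP : (#G.nonAdjPairs : ℝ) ≤ (√(1 - α) * n) ^ 2 := by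
    rw [mul_pow, Real.sq_sqrt (by linarith)]
    nlinarith
  have hsqrt : √(#G.nonAdjPairs : ℝ) ≤ √(1 - α) * n := (Real.sqrt_le_left (by positivity)).2 hP
  have hs : √(1 - α) ≤ 1 := Real.sqrt_le_one.2 (by linarith)
  have hkey := G.sq_card_sub_sqrt_card_nonAdjPairs_le hK22
  rw [Fintype.card_fin] at hkey
  have hsq : ((1 - √(1 - α)) * n) ^ 2 ≤ (n - √(#G.nonAdjPairs : ℝ)) ^ 2 :=
    pow_le_pow_left₀ (by nlinarith) (by linarith) 2
  refine le_of_mul_le_mul_right ?_ (by exact_mod_cast hn : (0 : ℝ) < n)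
  linarith
end

section
/- Fix integers m ≥ k ≥ 2, an integer i ≥ 2, and c ∈ (0,1). There exists n₀ (depending only on c, i, and k) such that for all n ≥ n₀ the following holds. Let H = (V, E) be a k-uniform hypergraph on n vertices with ω(H) ≤ (c/2)·n which does not contain a complete m-tuple of missing edges. Then for every family F_i ⊆ C(V,i) with |F_i| ≥ c·C(n,i), there exist a family F_{i−1} ⊆ C(V,i−1) and a missing edge τ of H such that (1) |F_{i−1}| ≥ (c/(12km))^k · C(n,i−1), and (2) σ ∪ {t} ∈ F_i for all σ ∈ F_{i−1} and all t ∈ τ. -/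
open Finset
open scoped Classical

/-- `S` is a clique in the `k`-uniform hypergraph with edge set `E`:
every `k`-element subset of `S` is an edge. -/
def IsHClique {V : Type*} [DecidableEq V] (E : Finset (Finset V)) (k : ℕ)
    (S : Finset V) : Prop :=
  ∀ t : Finset V, t ⊆ S → t.card = k → t ∈ E

/-- `τ` is a missing edge of the `k`-uniform hypergraph with edge set `E`. -/
def IsMissing {V : Type*} [DecidableEq V] (E : Finset (Finset V)) (k : ℕ)
    (τ : Finset V) : Prop :=
  τ.card = k ∧ τ ∉ E

/-- The clique number `ω(H)`: the maximum number of vertices of a clique. -/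
noncomputable def hOmega (V : Type*) [Fintype V] [DecidableEq V]
    (E : Finset (Finset V)) (k : ℕ) : ℕ :=
  Finset.sup ((Finset.univ : Finset V).powerset.filter fun S => IsHClique E k S)
    Finset.card

/-- `c_m(H)`: the number of `m`-element vertex subsets that are cliques. -/
noncomputable def cliqueCount (V : Type*) [Fintype V] [DecidableEq V]
    (E : Finset (Finset V)) (k m : ℕ) : ℕ :=
  (((Finset.univ : Finset V).powersetCard m).filter fun S => IsHClique E k S).card

/-- The number of missing edges contained in `S`. -/
noncomputable def missingIn {V : Type*} [DecidableEq V] (E : Finset (Finset V))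
    (k : ℕ) (S : Finset V) : ℕ :=
  ((S.powersetCard k).filter fun t => t ∉ E).card

/-- `H` contains a complete `m`-tuple of missing edges: pairwise disjoint missing
edges `τ 0, …, τ (m-1)` such that every transversal `{t 0, …, t (m-1)}` is a clique. -/
def HasCompleteTuple {V : Type*} [DecidableEq V] (E : Finset (Finset V))
    (k m : ℕ) : Prop :=
  ∃ τ : Fin m → Finset V,
    (∀ i, IsMissing E k (τ i)) ∧
    (∀ i j, i ≠ j → Disjoint (τ i) (τ j)) ∧
    ∀ t : Fin m → V, (∀ i, t i ∈ τ i) →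
      IsHClique E k (Finset.image t Finset.univ)

/-- The extended binomial coefficient `B(x, k)`. -/
noncomputable def extBinom (x : ℝ) (k : ℕ) : ℝ :=
  if (k : ℝ) - 1 ≤ x then (∏ i ∈ Finset.range k, (x - (i : ℝ))) / (Nat.factorial k) else 0

/-!
For an `(i-1)`-set `σ`, let `L(σ)` be the set of vertices `v` with `σ ∪ {v} ∈ F_i`; double counting
gives `∑_σ |L(σ)| = i |F_i| ≥ c (n - i + 1) C(n, i-1)`, and `|L(σ)| - ω ≳ c n / 12` on average.

Supersaturation: a vertex set `S` contains at least `((|S| - ω - k(m+1)) / (km))^k` missing edges.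
Greedily pick `t ≈ (|S| - ω) / k` pairwise disjoint missing edges in `S` (a set of more than `ω`
vertices is not a clique). No `m` of them form a complete `m`-tuple, so some transversal of them
contains a missing edge `ρ`, which meets exactly `k` of the `m`; `ρ` determines those `k`, so it
arises from at most `C(t-k, m-k)` of the `C(t, m)` choices, and `C(t, m) / C(t-k, m-k) ≥ (t/m)^k`.

By Jensen's inequality the links then contain `≥ C(n, i-1) (c n / (12 k m))^k` missing edges in
total, so some missing edge `τ` lies in the links of `(c / (12 k m))^k C(n, i-1)` sets `σ`; these
form `F_{i-1}`.
-/

lemma choose_sub_mul_pow_le_choose_mul_pow {k m t : ℕ} (hkm : k ≤ m) (hmt : m ≤ t) :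
    (t - k).choose (m - k) * t ^ k ≤ t.choose m * m ^ k := by
  induction k with
  | zero => simp
  | succ k ih =>
    have hpascal :
        (t - k) * (t - (k + 1)).choose (m - (k + 1)) = (t - k).choose (m - k) * (m - k) := by
      obtain ⟨a, ha⟩ : ∃ a, t - k = a + 1 := ⟨t - (k + 1), by omega⟩
      obtain ⟨b, hb⟩ : ∃ b, m - k = b + 1 := ⟨m - (k + 1), by omega⟩
      rw [ha, hb, show t - (k + 1) = a by omega, show m - (k + 1) = b by omega,
        Nat.add_one_mul_choose_eq]
    have hratio : (m - k) * t ≤ (t - k) * m := by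
      rw [Nat.sub_mul, Nat.sub_mul, mul_comm m t]
      exact Nat.sub_le_sub_left (Nat.mul_le_mul_left k hmt) _
    refine Nat.le_of_mul_le_mul_left ?_ (show 0 < t - k by omega)
    calc (t - k) * ((t - (k + 1)).choose (m - (k + 1)) * t ^ (k + 1))
        = (t - k).choose (m - k) * t ^ k * ((m - k) * t) := by rw [← mul_assoc, hpascal]; ring
      _ ≤ t.choose m * m ^ k * ((t - k) * m) := Nat.mul_le_mul (ih (by omega)) hratio
      _ = (t - k) * (t.choose m * m ^ (k + 1)) := by ring

lemma card_mul_pow_le_sum_pow {ι : Type*} {s : Finset ι} {f : ι → ℝ} (hf : ∀ i ∈ s, 0 ≤ f i)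
    {a : ℝ} (ha : 0 ≤ a) (h : s.card * a ≤ ∑ i ∈ s, f i) (n : ℕ) :
    s.card * a ^ n ≤ ∑ i ∈ s, f i ^ n := by
  rcases n with _ | n
  · simp
  rcases s.eq_empty_or_nonempty with rfl | hs
  · simp
  have hcard : (0 : ℝ) < s.card := by exact_mod_cast hs.card_pos
  calc s.card * a ^ (n + 1) = (s.card * a) ^ (n + 1) / (s.card : ℝ) ^ n := by
        field_simp; ring
    _ ≤ (∑ i ∈ s, f i) ^ (n + 1) / (s.card : ℝ) ^ n := by gcongr
    _ ≤ ∑ i ∈ s, f i ^ (n + 1) := pow_sum_div_card_le_sum_pow hf n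

section Hypergraph

variable {V : Type*} [DecidableEq V] {E : Finset (Finset V)} {k m : ℕ}

lemma exists_missing_transversal (hnot : ¬ HasCompleteTuple E k m) {A : Finset (Finset V)}
    (hA : A.card = m) (hmiss : ∀ σ ∈ A, IsMissing E k σ)
    (hdisj : (A : Set (Finset V)).PairwiseDisjoint id) :
    ∃ ρ, IsMissing E k ρ ∧ ρ ⊆ A.sup id ∧ (A.filter fun σ => ¬ Disjoint σ ρ).card = k := by
  let e := (A.equivFinOfCardEq hA).symm
  let τ : Fin m → Finset V := fun j => e j
  have hτA : ∀ j, τ j ∈ A := fun j => (e j).2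
  have hτ_surj : ∀ σ ∈ A, ∃ j, τ j = σ := fun σ hσ => ⟨e.symm ⟨σ, hσ⟩, by simp [τ]⟩
  have hτ_inj : Function.Injective τ := fun a b h => e.injective (Subtype.ext h)
  have hτ_disj : ∀ a b, a ≠ b → Disjoint (τ a) (τ b) := fun a b h =>
    hdisj (hτA a) (hτA b) (hτ_inj.ne h)
  obtain ⟨t, ht, hT⟩ : ∃ t : Fin m → V, (∀ j, t j ∈ τ j) ∧ ¬ IsHClique E k (univ.image t) := by
    by_contra! h
    exact hnot ⟨τ, fun j => hmiss _ (hτA j), hτ_disj, h⟩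
  obtain ⟨ρ, hρT, hρk, hρE⟩ : ∃ ρ ⊆ univ.image t, ρ.card = k ∧ ρ ∉ E := by
    simpa [IsHClique] using hT
  obtain ⟨J, -, rfl⟩ := subset_image_iff.mp hρT
  have ht_inj : Function.Injective t := fun a b h => by
    by_contra hab
    exact disjoint_left.mp (hτ_disj a b hab) (ht a) (h ▸ ht b)
  have hAJ : (A.filter fun σ => ¬ Disjoint σ (J.image t)) = J.image τ := by
    ext σ
    simp only [mem_filter, mem_image, not_disjoint_iff]
    constructor
    · rintro ⟨hσ, _, hvσ, j, hj, rfl⟩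
      obtain ⟨l, rfl⟩ := hτ_surj σ hσ
      obtain rfl : l = j := by
        by_contra hlj
        exact disjoint_left.mp (hτ_disj l j hlj) hvσ (ht j)
      exact ⟨l, hj, rfl⟩
    · rintro ⟨j, hj, rfl⟩
      exact ⟨hτA j, t j, ht j, j, hj, rfl⟩
  refine ⟨J.image t, ⟨hρk, hρE⟩, fun v hv => ?_, ?_⟩
  · obtain ⟨j, -, rfl⟩ := mem_image.mp hv
    exact mem_sup.mpr ⟨τ j, hτA j, ht j⟩
  · rw [hAJ, card_image_of_injective _ hτ_inj, ← hρk, card_image_of_injective _ ht_inj]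

lemma filter_not_disjoint_eq_of_subset_sup {D A : Finset (Finset V)}
    (hD : (D : Set (Finset V)).PairwiseDisjoint id) (hAD : A ⊆ D) {ρ : Finset V}
    (hρ : ρ ⊆ A.sup id) :
    (D.filter fun σ => ¬ Disjoint σ ρ) = A.filter fun σ => ¬ Disjoint σ ρ := by
  refine Subset.antisymm (fun σ hσ => ?_) (filter_subset_filter _ hAD)
  obtain ⟨hσD, hσρ⟩ := mem_filter.mp hσ
  obtain ⟨v, hvσ, hvρ⟩ := not_disjoint_iff.mp hσρ
  obtain ⟨σ', hσ'A, hvσ'⟩ := mem_sup.mp (hρ hvρ)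
  obtain rfl := hD.elim_finset hσD (hAD hσ'A) v hvσ hvσ'
  exact mem_filter.mpr ⟨hσ'A, hσρ⟩

/-- Every such `A` contains the `k` members of `D` that meet `ρ`, so it is determined by its
other `m - k` members. -/
lemma card_le_choose_of_filter_not_disjoint {D : Finset (Finset V)}
    (hD : (D : Set (Finset V)).PairwiseDisjoint id) {ρ : Finset V}
    {𝒜 : Finset (Finset (Finset V))}
    (h𝒜 : ∀ A ∈ 𝒜, A ∈ D.powersetCard m ∧ ρ ⊆ A.sup id ∧
      (A.filter fun σ => ¬ Disjoint σ ρ).card = k) :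
    𝒜.card ≤ (D.card - k).choose (m - k) := by
  rcases 𝒜.eq_empty_or_nonempty with rfl | ⟨A₀, hA₀⟩
  · simp
  set B := D.filter fun σ => ¬ Disjoint σ ρ
  have hB : ∀ A ∈ 𝒜, B = A.filter fun σ => ¬ Disjoint σ ρ := fun A hA =>
    filter_not_disjoint_eq_of_subset_sup hD (mem_powersetCard.mp (h𝒜 A hA).1).1 (h𝒜 A hA).2.1
  have hBA : ∀ A ∈ 𝒜, B ⊆ A := fun A hA => hB A hA ▸ filter_subset _ _
  have hBk : B.card = k := hB A₀ hA₀ ▸ (h𝒜 A₀ hA₀).2.2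
  calc 𝒜.card ≤ ((D \ B).powersetCard (m - k)).card := by
        refine card_le_card_of_injOn (· \ B) (fun A hA => ?_) fun A₁ h₁ A₂ h₂ h => ?_
        · obtain ⟨hAD, hAm⟩ := mem_powersetCard.mp (h𝒜 A hA).1
          exact mem_powersetCard.mpr ⟨sdiff_subset_sdiff hAD subset_rfl,
            by rw [card_sdiff_of_subset (hBA A hA), hAm, hBk]⟩
        · rw [← sdiff_union_of_subset (hBA A₁ h₁), ← sdiff_union_of_subset (hBA A₂ h₂)]
          exact congrArg (· ∪ B) h
    _ = (D.card - k).choose (m - k) := by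
        rw [card_powersetCard, card_sdiff_of_subset (filter_subset _ _), hBk]

lemma choose_le_choose_mul_missingIn (hnot : ¬ HasCompleteTuple E k m) {S : Finset V}
    {D : Finset (Finset V)} (hDS : ∀ ρ ∈ D, ρ ⊆ S ∧ IsMissing E k ρ)
    (hD : (D : Set (Finset V)).PairwiseDisjoint id) :
    D.card.choose m ≤ (D.card - k).choose (m - k) * missingIn E k S := by
  have htransversal : ∀ A ∈ D.powersetCard m, ∃ ρ, IsMissing E k ρ ∧ ρ ⊆ A.sup id ∧
      (A.filter fun σ => ¬ Disjoint σ ρ).card = k := fun A hA =>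
    have ⟨hAD, hAm⟩ := mem_powersetCard.mp hA
    exists_missing_transversal hnot hAm (fun σ hσ => (hDS σ (hAD hσ)).2)
      (hD.subset (coe_subset.mpr hAD))
  choose! f hf using htransversal
  calc D.card.choose m = (D.powersetCard m).card := (card_powersetCard _ _).symm
    _ ≤ (D.card - k).choose (m - k) * ((D.powersetCard m).image f).card :=
        card_le_mul_card_image _ _ fun ρ _ => card_le_choose_of_filter_not_disjoint (ρ := ρ) hD
          fun A hA => by
            obtain ⟨hAD, rfl⟩ := mem_filter.mp hA
            exact ⟨hAD, (hf A hAD).2⟩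
    _ ≤ (D.card - k).choose (m - k) * missingIn E k S := by
        refine Nat.mul_le_mul_left _ (card_le_card fun ρ hρ => ?_)
        obtain ⟨A, hA, rfl⟩ := mem_image.mp hρ
        obtain ⟨⟨hρk, hρE⟩, hρA, -⟩ := hf A hA
        have hAS : A.sup id ⊆ S :=
          Finset.sup_le fun σ hσ => (hDS σ ((mem_powersetCard.mp hA).1 hσ)).1
        exact mem_filter.mpr ⟨mem_powersetCard.mpr ⟨hρA.trans hAS, hρk⟩, hρE⟩

variable [Fintype V]

lemma exists_missing_subset_of_hOmega_lt {S : Finset V} (h : hOmega V E k < S.card) :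
    ∃ ρ ⊆ S, IsMissing E k ρ := by
  by_contra! hS
  have hclique : IsHClique E k S := fun t hts htk => by
    by_contra htE
    exact hS t hts ⟨htk, htE⟩
  have : S.card ≤ hOmega V E k := le_sup (f := card) (by simpa using hclique)
  omega

lemma exists_pairwiseDisjoint_missing (hk : 1 ≤ k) (t : ℕ) {S : Finset V}
    (hS : hOmega V E k + k * t ≤ S.card) :
    ∃ D : Finset (Finset V), D.card = t ∧ (∀ ρ ∈ D, ρ ⊆ S ∧ IsMissing E k ρ) ∧
      (D : Set (Finset V)).PairwiseDisjoint id := by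
  induction t generalizing S with
  | zero => exact ⟨∅, rfl, by simp, by simp⟩
  | succ t ih =>
    rw [Nat.mul_succ] at hS
    obtain ⟨ρ, hρS, hρ⟩ := exists_missing_subset_of_hOmega_lt (E := E) (k := k) (S := S) (by omega)
    have hcard : (S \ ρ).card = S.card - k := by rw [card_sdiff_of_subset hρS, hρ.1]
    obtain ⟨D, hDt, hDS, hD⟩ := ih (S := S \ ρ) (by omega)
    have hρD : ∀ σ ∈ D, Disjoint ρ σ := fun σ hσ =>
      disjoint_of_subset_right (hDS σ hσ).1 disjoint_sdiff
    have hρ_notMem : ρ ∉ D := fun h => by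
      have hρk := hρ.1
      rw [disjoint_self.mp (hρD ρ h), bot_eq_empty, card_empty] at hρk
      omega
    refine ⟨insert ρ D, by rw [card_insert_of_notMem hρ_notMem, hDt], ?_, ?_⟩
    · simp only [mem_insert, forall_eq_or_imp]
      exact ⟨⟨hρS, hρ⟩, fun σ hσ => ⟨(hDS σ hσ).1.trans sdiff_subset, (hDS σ hσ).2⟩⟩
    · rw [coe_insert]
      exact hD.insert fun σ hσ _ => hρD σ hσ

lemma pow_le_missingIn_mul_pow (hk : 1 ≤ k) (hkm : k ≤ m) (hnot : ¬ HasCompleteTuple E k m)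
    {t : ℕ} (hmt : m ≤ t) {S : Finset V} (hS : hOmega V E k + k * t ≤ S.card) :
    t ^ k ≤ missingIn E k S * m ^ k := by
  obtain ⟨D, rfl, hDS, hD⟩ := exists_pairwiseDisjoint_missing hk _ hS
  refine Nat.le_of_mul_le_mul_left ?_ (Nat.choose_pos (Nat.sub_le_sub_right hmt k))
  calc (D.card - k).choose (m - k) * D.card ^ k ≤ D.card.choose m * m ^ k :=
        choose_sub_mul_pow_le_choose_mul_pow hkm hmt
    _ ≤ (D.card - k).choose (m - k) * missingIn E k S * m ^ k :=
        Nat.mul_le_mul_right _ (choose_le_choose_mul_missingIn hnot hDS hD)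
    _ = _ := by ring

lemma sub_pow_le_missingIn_mul_pow (hk : 1 ≤ k) (hkm : k ≤ m) (hnot : ¬ HasCompleteTuple E k m)
    (S : Finset V) :
    (S.card - (hOmega V E k + k * (m + 1))) ^ k ≤ missingIn E k S * (k * m) ^ k := by
  rcases le_or_gt S.card (hOmega V E k + k * (m + 1)) with hS | hS
  · simp [Nat.sub_eq_zero_of_le hS, Nat.pos_iff_ne_zero.mp hk]
  set x := S.card - hOmega V E k
  have hx : x < k * (x / k) + k := mul_comm k (x / k) ▸ Nat.lt_div_mul_add hk
  have hlt : S.card - (hOmega V E k + k * (m + 1)) < k * (x / k) := by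
    rw [Nat.mul_succ] at hS ⊢
    omega
  have hmt : m ≤ x / k := by
    refine (Nat.lt_of_mul_lt_mul_left (a := k) ?_).le
    rw [Nat.mul_succ] at hS
    omega
  calc (S.card - (hOmega V E k + k * (m + 1))) ^ k ≤ (k * (x / k)) ^ k :=
        Nat.pow_le_pow_left hlt.le k
    _ = k ^ k * (x / k) ^ k := mul_pow _ _ _
    _ ≤ k ^ k * (missingIn E k S * m ^ k) :=
        Nat.mul_le_mul_left _ (pow_le_missingIn_mul_pow hk hkm hnot hmt (by
          have := Nat.mul_div_le x k
          omega))
    _ = missingIn E k S * (k * m) ^ k := by ring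

lemma card_mul_pow_le_sum_missingIn (hk : 1 ≤ k) (hkm : k ≤ m)
    (hnot : ¬ HasCompleteTuple E k m) {ι : Type*} (P : Finset ι) (L : ι → Finset V) {Δ : ℝ}
    (hΔ : 0 ≤ Δ)
    (h : P.card * Δ ≤ ∑ σ ∈ P, (((L σ).card : ℝ) - (hOmega V E k + k * (m + 1) : ℕ))) :
    P.card * (Δ / (k * m)) ^ k ≤ ∑ σ ∈ P, (missingIn E k (L σ) : ℝ) := by
  set w := hOmega V E k + k * (m + 1)
  have hkm_pos : (0 : ℝ) < k * m := by
    have : 0 < k * m := Nat.mul_pos hk (hk.trans hkm)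
    exact_mod_cast this
  have hcast_sub : ∀ σ ∈ P, ((L σ).card : ℝ) - w ≤ (((L σ).card - w : ℕ) : ℝ) := fun σ _ => by
    rcases le_total w (L σ).card with hw | hw
    · rw [Nat.cast_sub hw]
    · rw [Nat.sub_eq_zero_of_le hw, Nat.cast_zero, sub_nonpos]
      exact_mod_cast hw
  calc P.card * (Δ / (k * m)) ^ k ≤ ∑ σ ∈ P, ((((L σ).card - w : ℕ) : ℝ) / (k * m)) ^ k := by
        refine card_mul_pow_le_sum_pow (fun _ _ => by positivity) (by positivity) ?_ k
        rw [← sum_div, mul_div_assoc']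
        gcongr
        exact h.trans (sum_le_sum hcast_sub)
    _ ≤ ∑ σ ∈ P, (missingIn E k (L σ) : ℝ) := by
        refine sum_le_sum fun σ _ => ?_
        rw [div_pow, div_le_iff₀ (by positivity)]
        exact_mod_cast sub_pow_le_missingIn_mul_pow hk hkm hnot (L σ)

lemma exists_missing_sum_missingIn_le {ι : Type*} (P : Finset ι) (L : ι → Finset V)
    (hpos : 0 < ∑ σ ∈ P, missingIn E k (L σ)) :
    ∃ τ, IsMissing E k τ ∧
      ∑ σ ∈ P, missingIn E k (L σ) ≤ (Fintype.card V).choose k * (P.filter (τ ⊆ L ·)).card := by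
  set M := (univ.powersetCard k).filter fun τ => τ ∉ E
  have hswap : ∑ σ ∈ P, missingIn E k (L σ) = ∑ τ ∈ M, (P.filter (τ ⊆ L ·)).card := by
    refine (sum_congr rfl fun σ _ => congrArg card ?_).trans
      (sum_card_bipartiteAbove_eq_sum_card_bipartiteBelow fun σ τ => τ ⊆ L σ)
    ext τ
    simp only [M, bipartiteAbove, mem_filter, mem_powersetCard, subset_univ, true_and]
    tauto
  have hM : M.Nonempty := by
    rw [nonempty_iff_ne_empty]
    rintro hM
    simp [hswap, hM] at hpos
  obtain ⟨τ, hτM, hτ⟩ := M.exists_max_image (fun τ => (P.filter (τ ⊆ L ·)).card) hM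
  obtain ⟨hτk, hτE⟩ := mem_filter.mp hτM
  refine ⟨τ, ⟨(mem_powersetCard.mp hτk).2, hτE⟩, ?_⟩
  calc ∑ σ ∈ P, missingIn E k (L σ) ≤ M.card • (P.filter (τ ⊆ L ·)).card :=
        hswap ▸ sum_le_card_nsmul _ _ _ hτ
    _ ≤ (Fintype.card V).choose k * (P.filter (τ ⊆ L ·)).card := by
        rw [smul_eq_mul, ← card_univ, ← card_powersetCard]
        exact Nat.mul_le_mul_right _ (card_filter_le _ _)

lemma exists_missing_card_mul_pow_le (hk : 1 ≤ k) (hkm : k ≤ m)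
    (hnot : ¬ HasCompleteTuple E k m) {ι : Type*} {P : Finset ι} (hP : P.Nonempty)
    (L : ι → Finset V) {Δ : ℝ} (hΔ : 0 < Δ)
    (h : P.card * Δ ≤ ∑ σ ∈ P, (((L σ).card : ℝ) - (hOmega V E k + k * (m + 1) : ℕ))) :
    ∃ τ, IsMissing E k τ ∧
      P.card * (Δ / (k * m)) ^ k ≤ (Fintype.card V).choose k * (P.filter (τ ⊆ L ·)).card := by
  have hsum := card_mul_pow_le_sum_missingIn hk hkm hnot P L hΔ.le h
  have hkm_pos : (0 : ℝ) < k * m := by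
    have : 0 < k * m := Nat.mul_pos hk (hk.trans hkm)
    exact_mod_cast this
  have hpos : (0 : ℝ) < P.card * (Δ / (k * m)) ^ k :=
    mul_pos (by exact_mod_cast hP.card_pos) (pow_pos (div_pos hΔ hkm_pos) k)
  obtain ⟨τ, hτ, hτP⟩ := exists_missing_sum_missingIn_le (E := E) P L
    (by exact_mod_cast hpos.trans_le hsum)
  exact ⟨τ, hτ, hsum.trans (by exact_mod_cast hτP)⟩

def link (F : Finset (Finset V)) (σ : Finset V) : Finset V :=
  univ.filter fun v => v ∉ σ ∧ insert v σ ∈ F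

lemma card_link {F : Finset (Finset V)} {j : ℕ} (hF : ∀ ρ ∈ F, ρ.card = j + 1) {σ : Finset V}
    (hσ : σ.card = j) : (link F σ).card = (F.filter (σ ⊆ ·)).card := by
  refine card_bij (fun v _ => insert v σ) (fun v hv => ?_) (fun a ha b _ h => ?_) fun ρ hρ => ?_
  · obtain ⟨-, -, hvF⟩ := mem_filter.mp hv
    exact mem_filter.mpr ⟨hvF, subset_insert v σ⟩
  · exact (insert_inj (mem_filter.mp ha).2.1).mp h
  · obtain ⟨hρF, hσρ⟩ := mem_filter.mp hρ
    obtain ⟨v, hv, rfl⟩ := exists_eq_insert_iff.mpr ⟨hσρ, by rw [hσ, hF _ hρF]⟩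
    exact ⟨v, mem_filter.mpr ⟨mem_univ v, hv, hρF⟩, rfl⟩

lemma sum_card_link {F : Finset (Finset V)} {j : ℕ} (hF : ∀ ρ ∈ F, ρ.card = j + 1) :
    ∑ σ ∈ univ.powersetCard j, (link F σ).card = F.card * (j + 1) := by
  calc ∑ σ ∈ univ.powersetCard j, (link F σ).card
      = ∑ σ ∈ univ.powersetCard j, (F.filter (σ ⊆ ·)).card :=
        sum_congr rfl fun σ hσ => card_link hF (mem_powersetCard.mp hσ).2
    _ = ∑ ρ ∈ F, ((univ.powersetCard j).filter (· ⊆ ρ)).card :=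
        sum_card_bipartiteAbove_eq_sum_card_bipartiteBelow _
    _ = ∑ ρ ∈ F, (j + 1) := sum_congr rfl fun ρ hρ => by
        have : (univ.powersetCard j).filter (· ⊆ ρ) = ρ.powersetCard j := by
          ext σ
          simp [mem_powersetCard, and_comm]
        rw [this, card_powersetCard, hF ρ hρ, Nat.choose_succ_self_right]
    _ = F.card * (j + 1) := by rw [sum_const, smul_eq_mul]

lemma choose_mul_le_sum_card_link_sub {F : Finset (Finset V)} {j : ℕ}
    (hF : ∀ ρ ∈ F, ρ.card = j + 1) (hj : j ≤ Fintype.card V) {c : ℝ}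
    (hc : c * (Fintype.card V).choose (j + 1) ≤ F.card) (w : ℝ) :
    (Fintype.card V).choose j * (c * (Fintype.card V - j) - w) ≤
      ∑ σ ∈ univ.powersetCard j, ((link F σ).card - w) := by
  have hpascal : ((Fintype.card V).choose (j + 1) : ℝ) * (j + 1) =
      (Fintype.card V).choose j * (Fintype.card V - j) := by
    rw [← Nat.cast_sub hj]
    exact_mod_cast Nat.choose_succ_right_eq _ j
  have hcF := mul_le_mul_of_nonneg_right hc (by positivity : (0 : ℝ) ≤ j + 1)
  rw [mul_assoc, hpascal] at hcF
  rw [sum_sub_distrib, sum_const, nsmul_eq_mul, ← Nat.cast_sum, sum_card_link hF,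
    card_powersetCard, card_univ]
  push_cast
  linarith

end Hypergraph

theorem iterated_step (k m i : ℕ) (hk : 2 ≤ k) (hkm : k ≤ m) (hi : 2 ≤ i)
    (c : ℝ) (hc : c ∈ Set.Ioo (0 : ℝ) 1) :
    ∃ n₀ : ℕ, ∀ n : ℕ, n₀ ≤ n →
      ∀ E : Finset (Finset (Fin n)),
        (∀ e ∈ E, e.card = k) →
        (hOmega (Fin n) E k : ℝ) ≤ (c / 2) * (n : ℝ) →
        ¬ HasCompleteTuple E k m →
        ∀ Fi : Finset (Finset (Fin n)),
          (∀ σ ∈ Fi, σ.card = i) →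
          c * (n.choose i : ℝ) ≤ (Fi.card : ℝ) →
          ∃ (Fi' : Finset (Finset (Fin n))) (τ : Finset (Fin n)),
            (∀ σ ∈ Fi', σ.card = i - 1) ∧
            IsMissing E k τ ∧
            (c / (12 * (k : ℝ) * (m : ℝ))) ^ k * (n.choose (i - 1) : ℝ) ≤ (Fi'.card : ℝ) ∧
            ∀ σ ∈ Fi', ∀ t ∈ τ, insert t σ ∈ Fi := by
  obtain ⟨hc0, hc1⟩ := hc
  obtain ⟨j, rfl⟩ : ∃ j, i = j + 1 := ⟨i - 1, by omega⟩
  refine ⟨⌈3 * (j + 1 + k * (m + 1) : ℝ) / c⌉₊, fun n hn E _ hω hnot Fi hFi hcard => ?_⟩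
  rw [Nat.add_sub_cancel]
  have hcn : 3 * (j + 1 + k * (m + 1) : ℝ) ≤ c * n := (div_le_iff₀' hc0).mp (Nat.ceil_le.mp hn)
  have hn : 3 * (j + 1 + k * (m + 1)) ≤ n := by
    have : (3 * (j + 1 + k * (m + 1)) : ℝ) ≤ n := by nlinarith
    exact_mod_cast this
  set P := (univ : Finset (Fin n)).powersetCard j
  set Δ : ℝ := c * (n - j) - (hOmega (Fin n) E k + k * (m + 1) : ℕ)
  have hP : (P.card : ℝ) = n.choose j := by simp [P]
  have hΔ : c * n / 12 ≤ Δ := by push_cast [Δ]; nlinarith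
  have hlink := choose_mul_le_sum_card_link_sub hFi (by simp only [Fintype.card_fin]; omega)
    (by simpa using hcard) (hOmega (Fin n) E k + k * (m + 1) : ℕ)
  rw [Fintype.card_fin, ← hP] at hlink
  obtain ⟨τ, hτ, hτP⟩ := exists_missing_card_mul_pow_le (by omega) hkm hnot
    (powersetCard_nonempty.mpr (by simp only [card_univ, Fintype.card_fin]; omega)) (link Fi)
    (by linarith [(by positivity : (0 : ℝ) < j + 1 + k * (m + 1))]) hlink
  refine ⟨P.filter (τ ⊆ link Fi ·), τ, fun σ hσ => (mem_powersetCard.mp (mem_filter.mp hσ).1).2, hτ,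
    ?_, fun σ hσ t ht => (mem_filter.mp ((mem_filter.mp hσ).2 ht)).2.2⟩
  rw [Fintype.card_fin] at hτP
  have hkn : (0 : ℝ) < n.choose k := by exact_mod_cast Nat.choose_pos (by nlinarith)
  refine le_of_mul_le_mul_left ?_ hkn
  calc (n.choose k : ℝ) * ((c / (12 * k * m)) ^ k * n.choose j)
      ≤ n ^ k * ((c / (12 * k * m)) ^ k * P.card) := by
        rw [hP]; gcongr; exact_mod_cast Nat.choose_le_pow n k
    _ = P.card * (c * n / 12 / (k * m)) ^ k := by ring
    _ ≤ P.card * (Δ / (k * m)) ^ k := by gcongr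
    _ ≤ n.choose k * (P.filter (τ ⊆ link Fi ·)).card := hτP
end

section
/- For any integers m ≥ k ≥ 2 and any ε ∈ (0,1), there exists δ > 0 (depending on ε, k, m) such that for all sufficiently large n the following holds: if H is a k-uniform hypergraph on n vertices that does not contain a complete m-tuple of missing edges and ω(H) ≤ (1−ε)·n, then c_m(H) ≤ (1−δ)·C(n,m). -/
open Finset
open scoped Classical

/-! Since `ω(H) ≤ (1 - ε) n`, deleting fewer than `ε n` vertices never leaves a clique, so one
can greedily pick about `ε n / k` pairwise disjoint missing edges. Every `m` of them fail to form
a complete `m`-tuple, so each choice of `m` of them has a transversal that is not a clique, and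
distinct choices give distinct transversals. Hence at least `C(ε n / k, m) ≥ δ C(n, m)` of the
`m`-sets are not cliques. -/

section

variable {V : Type*} [DecidableEq V] (E : Finset (Finset V)) (k : ℕ)

theorem card_le_hOmega [Fintype V] {S : Finset V} (hS : IsHClique E k S) :
    S.card ≤ hOmega V E k :=
  Finset.le_sup (by simp [hS])

theorem exists_missing_subset_of_hOmega_lt_card [Fintype V] {S : Finset V}
    (h : hOmega V E k < S.card) : ∃ t ⊆ S, IsMissing E k t := by
  by_contra! hS
  refine (card_le_hOmega E k fun t ht htk => ?_).not_gt h
  by_contra htE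
  exact hS t ht ⟨htk, htE⟩

theorem exists_pairwiseDisjoint_missing_s8 [Fintype V] (hk : 0 < k) :
    ∀ r : ℕ, hOmega V E k + r * k ≤ Fintype.card V →
      ∃ 𝒯 : Finset (Finset V), 𝒯.card = r ∧ (∀ τ ∈ 𝒯, IsMissing E k τ) ∧
        (𝒯 : Set (Finset V)).PairwiseDisjoint id
  | 0, _ => ⟨∅, rfl, by simp, by simp⟩
  | r + 1, h => by
    obtain ⟨𝒯, hcard, hmiss, hdisj⟩ :=
      exists_pairwiseDisjoint_missing_s8 hk r (by rw [add_mul] at h; omega)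
    have hU : (𝒯.biUnion id).card ≤ r * k := by
      calc (𝒯.biUnion id).card ≤ ∑ τ ∈ 𝒯, τ.card := card_biUnion_le
        _ = r * k := by rw [sum_congr rfl fun τ hτ => (hmiss τ hτ).1, sum_const, hcard,
                          smul_eq_mul]
    obtain ⟨t, ht, htmiss⟩ :=
      exists_missing_subset_of_hOmega_lt_card E k (S := univ \ 𝒯.biUnion id) (by
        rw [card_sdiff_of_subset (subset_univ _), card_univ, add_mul] at *
        omega)
    have htdisj : ∀ τ ∈ 𝒯, Disjoint t τ := fun τ hτ =>
      (disjoint_biUnion_right _ _ _).mp (subset_sdiff.mp ht).2 τ hτ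
    have htnew : t ∉ 𝒯 := fun ht𝒯 => by
      have := htmiss.1
      rw [disjoint_self.mp (htdisj t ht𝒯), bot_eq_empty, card_empty] at this
      omega
    refine ⟨insert t 𝒯, by rw [card_insert_of_notMem htnew, hcard], ?_, ?_⟩
    · simpa [htmiss] using hmiss
    · rw [coe_insert]
      exact hdisj.insert fun τ hτ _ => htdisj τ hτ

theorem exists_nonClique_transversal {m : ℕ} (hE : ¬HasCompleteTuple E k m)
    {𝒮 : Finset (Finset V)} (hcard : 𝒮.card = m) (hmiss : ∀ σ ∈ 𝒮, IsMissing E k σ)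
    (hdisj : (𝒮 : Set (Finset V)).PairwiseDisjoint id) :
    ∃ T : Finset V, T.card = m ∧ ¬IsHClique E k T ∧ T ⊆ 𝒮.biUnion id ∧
      ∀ σ ∈ 𝒮, ¬Disjoint T σ := by
  set e := (𝒮.equivFinOfCardEq hcard).symm
  have he_disj : ∀ i j, i ≠ j → Disjoint (e i : Finset V) (e j) := fun i j hij =>
    hdisj (e i).2 (e j).2 fun h => hij (e.injective (Subtype.ext h))
  obtain ⟨t, ht, hT⟩ : ∃ t : Fin m → V, (∀ i, t i ∈ (e i : Finset V)) ∧
      ¬IsHClique E k (univ.image t) := by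
    by_contra! h
    exact hE ⟨fun i => e i, fun i => hmiss _ (e i).2, he_disj, h⟩
  have ht_inj : Function.Injective t := fun i j hij => by
    by_contra hne
    exact disjoint_left.mp (he_disj i j hne) (ht i) (hij ▸ ht j)
  refine ⟨univ.image t, by simp [card_image_of_injective _ ht_inj], hT, ?_, ?_⟩
  · simp only [image_subset_iff, mem_univ, mem_biUnion, id, true_implies]
    exact fun i => ⟨e i, (e i).2, ht i⟩
  · intro σ hσ
    obtain ⟨i, hi⟩ := e.surjective ⟨σ, hσ⟩
    exact not_disjoint_iff.mpr ⟨t i, mem_image_of_mem _ (mem_univ _), by simpa [hi] using ht i⟩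

/-- The non-clique transversal of an `m`-subset of `𝒯` recovers that subset as the members of `𝒯`
it meets, so distinct subsets give distinct non-cliques. -/
theorem cliqueCount_add_choose_le [Fintype V] {m : ℕ} (hE : ¬HasCompleteTuple E k m)
    {𝒯 : Finset (Finset V)} (hmiss : ∀ τ ∈ 𝒯, IsMissing E k τ)
    (hdisj : (𝒯 : Set (Finset V)).PairwiseDisjoint id) :
    cliqueCount V E k m + 𝒯.card.choose m ≤ (Fintype.card V).choose m := by
  set N := (univ.powersetCard m).filter fun S => ¬IsHClique E k S
  have hsub : 𝒯.powersetCard m ⊆ N.image fun T => 𝒯.filter fun τ => ¬Disjoint T τ := by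
    intro 𝒮 h𝒮
    obtain ⟨h𝒮𝒯, h𝒮card⟩ := mem_powersetCard.mp h𝒮
    obtain ⟨T, hTcard, hT, hTsub, hTmeet⟩ := exists_nonClique_transversal E k hE h𝒮card
      (fun σ hσ => hmiss σ (h𝒮𝒯 hσ)) (hdisj.subset (coe_subset.mpr h𝒮𝒯))
    refine mem_image.mpr ⟨T, by simp [N, hTcard, hT], ?_⟩
    ext τ
    simp only [mem_filter]
    constructor
    · rintro ⟨hτ, hmeet⟩
      by_contra hτ𝒮
      refine hmeet (disjoint_of_subset_left hTsub ((disjoint_biUnion_left _ _ _).mpr ?_))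
      exact fun σ hσ => hdisj (h𝒮𝒯 hσ) hτ (ne_of_mem_of_not_mem hσ hτ𝒮)
    · exact fun hτ => ⟨h𝒮𝒯 hτ, hTmeet τ hτ⟩
  calc cliqueCount V E k m + 𝒯.card.choose m ≤ cliqueCount V E k m + N.card := by
        rw [← card_powersetCard]
        gcongr
        exact (card_le_card hsub).trans card_image_le
    _ = (Fintype.card V).choose m := by
        rw [cliqueCount, card_filter_add_card_filter_not, card_powersetCard, card_univ]

end

theorem pow_mul_choose_le_choose_floor {c : ℝ} (hc : 0 < c) {m n : ℕ} (hn : 2 * m ≤ c * n) :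
    (c / 2) ^ m * n.choose m ≤ (⌊c * n⌋₊.choose m : ℝ) := by
  set r := ⌊c * n⌋₊
  have hr : c * n ≤ r + 1 := (Nat.lt_floor_add_one _).le
  have hmr : m ≤ r + 1 := by exact_mod_cast (show (m : ℝ) ≤ r + 1 by linarith)
  refine le_of_mul_le_mul_right ?_ (show (0 : ℝ) < m.factorial by positivity)
  calc (c / 2) ^ m * n.choose m * m.factorial = (c / 2) ^ m * n.descFactorial m := by
        rw [Nat.descFactorial_eq_factorial_mul_choose]; push_cast; ring
    _ ≤ (c / 2) ^ m * n ^ m := by gcongr; exact_mod_cast Nat.descFactorial_le_pow n m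
    _ = (c * n / 2) ^ m := by ring
    _ ≤ ((r + 1 - m : ℕ) : ℝ) ^ m := by
        gcongr
        rw [Nat.cast_sub hmr]; push_cast; linarith
    _ ≤ r.descFactorial m := by exact_mod_cast Nat.pow_sub_le_descFactorial r m
    _ = r.choose m * m.factorial := by
        rw [Nat.descFactorial_eq_factorial_mul_choose]; push_cast; ring

theorem few_cliques_of_small_omega_general (k m : ℕ) (hk : 2 ≤ k)
    (ε : ℝ) (hε : ε ∈ Set.Ioo (0 : ℝ) 1) :
    ∃ δ : ℝ, 0 < δ ∧
      ∃ n₀ : ℕ, ∀ n : ℕ, n₀ ≤ n →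
        ∀ E : Finset (Finset (Fin n)),
          (∀ e ∈ E, e.card = k) →
          ¬ HasCompleteTuple E k m →
          (hOmega (Fin n) E k : ℝ) ≤ (1 - ε) * (n : ℝ) →
          (cliqueCount (Fin n) E k m : ℝ) ≤ (1 - δ) * (n.choose m : ℝ) := by
  have hk0 : (0 : ℝ) < k := by norm_cast; omega
  have hc : 0 < ε / k := div_pos hε.1 hk0
  refine ⟨(ε / k / 2) ^ m, by positivity, ⌈2 * m / (ε / k)⌉₊, fun n hn E _ hE hω => ?_⟩
  have hmn : 2 * m ≤ ε / k * n := by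
    rw [← div_le_iff₀' hc]
    exact Nat.ceil_le.mp hn
  set r := ⌊ε / k * n⌋₊
  have hr : hOmega (Fin n) E k + r * k ≤ Fintype.card (Fin n) := by
    have hrk : (r : ℝ) * k ≤ ε * n := by
      calc (r : ℝ) * k ≤ ε / k * n * k := by gcongr; exact Nat.floor_le (by positivity)
        _ = ε * n := by field_simp
    rw [Fintype.card_fin]
    exact_mod_cast (show (hOmega (Fin n) E k : ℝ) + r * k ≤ n by linarith)
  obtain ⟨𝒯, h𝒯, hmiss, hdisj⟩ := exists_pairwiseDisjoint_missing_s8 E k (by omega) r hr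
  have hcount := cliqueCount_add_choose_le E k hE hmiss hdisj
  rw [h𝒯, Fintype.card_fin] at hcount
  have hcount' : (cliqueCount (Fin n) E k m : ℝ) + r.choose m ≤ n.choose m := by
    exact_mod_cast hcount
  have hbound := pow_mul_choose_le_choose_floor hc hmn
  linarith

theorem few_cliques_of_small_omega (k m : ℕ) (hk : 2 ≤ k) (hkm : k ≤ m)
    (ε : ℝ) (hε : ε ∈ Set.Ioo (0 : ℝ) 1) :
    ∃ δ : ℝ, 0 < δ ∧
      ∃ n₀ : ℕ, ∀ n : ℕ, n₀ ≤ n →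
        ∀ E : Finset (Finset (Fin n)),
          (∀ e ∈ E, e.card = k) →
          ¬ HasCompleteTuple E k m →
          (hOmega (Fin n) E k : ℝ) ≤ (1 - ε) * (n : ℝ) →
          (cliqueCount (Fin n) E k m : ℝ) ≤ (1 - δ) * (n.choose m : ℝ) :=
  few_cliques_of_small_omega_general k m hk ε hε
end

section
/- (Fractional Helly theorem) For every integer d ≥ 1 and every α ∈ (0,1), there exists β = β(α, d) ∈ (0,1) with the following property: if F is a family of n > d+1 convex sets in ℝ^d such that at least α·C(n, d+1) of the (d+1)-element subfamilies of F have nonempty intersection, then there are at least β·n members of F whose common intersection is nonempty. -/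
/-!
After replacing each set by the convex hull of finitely many witness points, all sets are
compact. For an intersecting `(d+1)`-subfamily `D`, Radon's theorem shows that the minimum-norm
point of `⋂ D` is already the minimum-norm point of `⋂ (D \ {j})` for some `j ∈ D`.
Pigeonholing over these `d`-subfamilies, some `d`-set `s` arises from at least
`α C(n,d+1) / C(n,d) = α (n-d)/(d+1)` subfamilies `D`. By uniqueness of the minimum-norm point
of the convex set `⋂ s`, all of them share one point, which then lies in all `d + α (n-d)/(d+1)`
sets of their union.
-/

open Finset
open scoped Classical

open Module Set in
theorem QuasiconvexOn.exists_mem_isMinOn_biInter_erase {ι 𝕜 E β : Type*} [Field 𝕜]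
    [LinearOrder 𝕜] [IsStrictOrderedRing 𝕜] [AddCommGroup E] [Module 𝕜 E] [FiniteDimensional 𝕜 E]
    [LinearOrder β] [DecidableEq ι] {f : E → β} (hf : QuasiconvexOn 𝕜 univ f)
    {C : ι → Set E} (hC : ∀ i, Convex 𝕜 (C i)) {D : Finset ι} (hD : finrank 𝕜 E < #D)
    {x : E} (hxD : x ∈ ⋂ i ∈ D, C i) (hx : IsMinOn f (⋂ i ∈ D, C i) x) :
    ∃ j ∈ D, IsMinOn f (⋂ i ∈ D.erase j, C i) x := by
  by_contra! hcon
  have hy : ∀ j : D, ∃ y ∈ ⋂ i ∈ D.erase j, C i, f y < f x := fun j => by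
    simpa [IsMinOn, IsMinFilter] using hcon j j.2
  choose y hyC hyf using hy
  let g : Option D → E := fun o => o.elim x y
  have hdep : ¬ AffineIndependent 𝕜 g := fun h => by
    have := h.card_le_finrank_succ.trans (Nat.succ_le_succ (Submodule.finrank_le _))
    simp only [Fintype.card_option, Fintype.card_coe] at this
    omega
  obtain ⟨I, p, hpI, hpIc⟩ := Convex.radon_partition hdep
  -- Whichever side of the partition avoids `x` puts `p` below `f x`; since every `C i` contains
  -- all the points `g o` except `y i`, one of the two sides also puts `p` in `C i`.
  have hside : ∀ A : Set (Option D), none ∉ A →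
      p ∈ convexHull 𝕜 (g '' A) → p ∈ convexHull 𝕜 (g '' Aᶜ) → False := by
    intro A hA hpA hpAc
    have hpf : f p < f x := by
      refine (convexHull_min (t := {z ∈ univ | f z < f x}) ?_ (hf.convex_lt (f x)) hpA).2
      rintro _ ⟨(_ | j), hj, rfl⟩
      · exact absurd hj hA
      · exact ⟨mem_univ _, hyf j⟩
    have hsub : ∀ S : Set (Option D), ∀ i (hi : i ∈ D), some ⟨i, hi⟩ ∉ S → g '' S ⊆ C i := by
      rintro S i hi hiS _ ⟨(_ | j), hj, rfl⟩
      · exact mem_iInter₂.1 hxD i hi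
      · refine mem_iInter₂.1 (hyC j) i (mem_erase.2 ⟨?_, hi⟩)
        rintro rfl
        exact hiS hj
    have hpD : p ∈ ⋂ i ∈ D, C i := mem_iInter₂.2 fun i hi => by
      by_cases hiA : some ⟨i, hi⟩ ∈ A
      · exact convexHull_min (hsub Aᶜ i hi (by simpa using hiA)) (hC i) hpAc
      · exact convexHull_min (hsub A i hi hiA) (hC i) hpA
    exact (hx hpD).not_gt hpf
  by_cases hI : none ∈ I
  · exact hside Iᶜ (by simpa using hI) hpIc (by rwa [compl_compl])
  · exact hside I hI hpI hpIc

theorem Convex.eq_of_isMinOn_norm {E : Type*} [NormedAddCommGroup E] [NormedSpace ℝ E]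
    [StrictConvexSpace ℝ E] {s : Set E} (hs : Convex ℝ s) {x y : E} (hx : x ∈ s) (hy : y ∈ s)
    (hmx : IsMinOn norm s x) (hmy : IsMinOn norm s y) : x = y := by
  by_contra hne
  have hmid : (1 / 2 : ℝ) • (x + y) ∈ s := by
    rw [smul_add]
    exact hs hx hy (by norm_num) (by norm_num) (by norm_num)
  exact (hmx hmid).not_gt ((norm_midpoint_lt_iff (le_antisymm (hmx hy) (hmy hx))).2 hne)

theorem Finset.card_le_card_sdiff_of_forall_erase_eq {α : Type*} [DecidableEq α]
    {T : Finset (Finset α)} {s u : Finset α} (hT : ∀ t ∈ T, t ⊆ u ∧ ∃ a ∈ t, t.erase a = s) :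
    #T ≤ #(u \ s) := by
  refine (card_le_card fun t ht => ?_).trans (card_image_le (f := (insert · s)))
  obtain ⟨htu, a, hat, rfl⟩ := hT t ht
  exact mem_image.2 ⟨a, mem_sdiff.2 ⟨htu hat, notMem_erase a t⟩, insert_erase hat⟩

open Set in
theorem exists_isCompact_convex_subset_biInter_nonempty {ι E : Type*} [NormedAddCommGroup E]
    [NormedSpace ℝ E] {F : ι → Set E} (hF : ∀ i, Convex ℝ (F i)) (G : Finset (Finset ι))
    (hG : ∀ D ∈ G, (⋂ i ∈ D, F i).Nonempty) :
    ∃ C : ι → Set E, (∀ i, IsCompact (C i) ∧ Convex ℝ (C i) ∧ C i ⊆ F i) ∧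
      ∀ D ∈ G, (⋂ i ∈ D, C i).Nonempty := by
  choose! w hw using hG
  refine ⟨fun i => convexHull ℝ (w '' {D | D ∈ G ∧ i ∈ D}),
    fun i => ⟨?_, convex_convexHull ℝ _, ?_⟩,
    fun D hD => ⟨w D, mem_iInter₂.2 fun i hi => subset_convexHull ℝ _ ⟨D, ⟨hD, hi⟩, rfl⟩⟩⟩
  · have hfin : {D | D ∈ G ∧ i ∈ D}.Finite := G.finite_toSet.subset fun D hD => hD.1
    exact (hfin.image w).isCompact_convexHull (𝕜 := ℝ)
  · refine convexHull_min ?_ (hF i)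
    rintro _ ⟨D, ⟨hD, hi⟩, rfl⟩
    exact mem_iInter₂.1 (hw D hD) i hi

open Set in
theorem exists_card_add_card_le_biInter_nonempty_of_isMinOn_norm {ι E : Type*}
    [NormedAddCommGroup E] [NormedSpace ℝ E] [StrictConvexSpace ℝ E] [DecidableEq ι]
    {C : ι → Set E} (hC : ∀ i, Convex ℝ (C i)) {s : Finset ι} {T : Finset (Finset ι)}
    (hT : T.Nonempty)
    (hTs : ∀ t ∈ T, (∃ a ∈ t, t.erase a = s) ∧ ∃ x ∈ ⋂ i ∈ t, C i, IsMinOn norm (⋂ i ∈ s, C i) x) :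
    ∃ u : Finset ι, #s + #T ≤ #u ∧ (⋂ i ∈ u, C i).Nonempty := by
  choose! x hxt hxmin using fun t ht => (hTs t ht).2
  obtain ⟨t₀, ht₀⟩ := hT
  have hst : ∀ t ∈ T, s ⊆ t := fun t ht => by
    obtain ⟨a, -, rfl⟩ := (hTs t ht).1
    exact erase_subset a t
  have hxs : ∀ t ∈ T, x t ∈ ⋂ i ∈ s, C i := fun t ht =>
    biInter_subset_biInter_left (hst t ht) (hxt t ht)
  have hx : ∀ t ∈ T, x t = x t₀ := fun t ht =>
    (convex_iInter₂ fun i _ => hC i).eq_of_isMinOn_norm (hxs t ht) (hxs t₀ ht₀)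
      (hxmin t ht) (hxmin t₀ ht₀)
  refine ⟨T.biUnion id, ?_, x t₀, mem_iInter₂.2 fun i hi => ?_⟩
  · have hsu : s ⊆ T.biUnion id := (hst t₀ ht₀).trans (subset_biUnion_of_mem id ht₀)
    rw [← card_sdiff_add_card_eq_card hsu, add_comm]
    gcongr
    exact card_le_card_sdiff_of_forall_erase_eq fun t ht =>
      ⟨subset_biUnion_of_mem id ht, (hTs t ht).1⟩
  · obtain ⟨t, ht, hit⟩ := mem_biUnion.1 hi
    rw [← hx t ht]
    exact mem_iInter₂.1 (hxt t ht) i hit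

open Module Set in
theorem exists_le_card_biInter_nonempty_of_isCompact {ι E : Type*} [Fintype ι]
    [NormedAddCommGroup E] [NormedSpace ℝ E] [StrictConvexSpace ℝ E] [FiniteDimensional ℝ E]
    {d : ℕ} (hE : finrank ℝ E ≤ d) {C : ι → Set E} (hCc : ∀ i, IsCompact (C i))
    (hCv : ∀ i, Convex ℝ (C i)) {G : Finset (Finset ι)} (hG : G.Nonempty)
    (hGD : ∀ D ∈ G, #D = d + 1 ∧ (⋂ i ∈ D, C i).Nonempty) :
    ∃ I : Finset ι, (#G : ℝ) / (Fintype.card ι).choose d + d ≤ #I ∧ (⋂ i ∈ I, C i).Nonempty := by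
  have hstep : ∀ D ∈ G, ∃ j ∈ D, ∃ x ∈ ⋂ i ∈ D, C i, IsMinOn norm (⋂ i ∈ D.erase j, C i) x := by
    intro D hD
    obtain ⟨hcard, hne⟩ := hGD D hD
    obtain ⟨i₀, hi₀⟩ : D.Nonempty := card_pos.1 (by omega)
    have hK : IsCompact (⋂ i ∈ D, C i) := (hCc i₀).of_isClosed_subset
      (isClosed_biInter fun i _ => (hCc i).isClosed) (biInter_subset_of_mem hi₀)
    obtain ⟨x, hx, hxmin⟩ := hK.exists_isMinOn hne continuous_norm.continuousOn
    obtain ⟨j, hj, hjmin⟩ :=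
      (convexOn_norm convex_univ).quasiconvexOn.exists_mem_isMinOn_biInter_erase hCv
        (by omega) hx hxmin
    exact ⟨j, hj, x, hx, hjmin⟩
  obtain ⟨D₀, hD₀⟩ := hG
  have hcard : d + 1 ≤ Fintype.card ι := (hGD D₀ hD₀).1 ▸ card_le_univ D₀
  have : Nonempty ι := Fintype.card_pos_iff.1 (by omega)
  choose! j hjD hjx using hstep
  set B := (univ : Finset ι).powersetCard d
  have hB : (0 : ℝ) < #B := by simpa [B] using Nat.choose_pos (by omega)
  have hmaps : ∀ D ∈ G, D.erase (j D) ∈ B := fun D hD => by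
    simp [B, mem_powersetCard, card_erase_of_mem (hjD D hD), (hGD D hD).1]
  obtain ⟨s, hsB, hs⟩ := exists_le_card_fiber_of_nsmul_le_card_of_maps_to hmaps
    ⟨_, hmaps D₀ hD₀⟩ (b := (#G : ℝ) / #B) (by rw [nsmul_eq_mul, mul_div_cancel₀ _ hB.ne'])
  set T := {D ∈ G | D.erase (j D) = s}
  have hT : T.Nonempty := card_pos.1 <| by
    exact_mod_cast (div_pos (by exact_mod_cast card_pos.2 ⟨D₀, hD₀⟩) hB).trans_le hs
  obtain ⟨I, hI, hIne⟩ := exists_card_add_card_le_biInter_nonempty_of_isMinOn_norm hCv hT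
    fun t ht => by
      obtain ⟨htG, hts⟩ := mem_filter.1 ht
      exact ⟨⟨j t, hjD t htG, hts⟩, hts ▸ hjx t htG⟩
  refine ⟨I, ?_, hIne⟩
  have hBd : #B = (Fintype.card ι).choose d := by simp [B]
  have hsd : #s = d := (mem_powersetCard.1 hsB).2
  calc (#G : ℝ) / (Fintype.card ι).choose d + d ≤ #s + #T := by
        rw [← hBd, hsd]
        linarith
    _ ≤ #I := by exact_mod_cast hI

theorem div_succ_mul_le_mul_choose_succ_div_choose_add {n d : ℕ} (hdn : d ≤ n) {α : ℝ}
    (hα : α ≤ 1) : α / (d + 1) * n ≤ α * n.choose (d + 1) / n.choose d + d := by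
  have hc : (0 : ℝ) < n.choose d := by exact_mod_cast Nat.choose_pos hdn
  have hid : (n.choose (d + 1) : ℝ) * (d + 1) = n.choose d * (n - d) := by
    rw [← Nat.cast_sub hdn]
    exact_mod_cast Nat.choose_succ_right_eq n d
  have hratio : α * n.choose (d + 1) / n.choose d = α * (n - d) / (d + 1) := by
    field_simp
    linear_combination α * hid
  rw [hratio, div_mul_eq_mul_div, div_add' _ _ _ (by positivity),
    div_le_div_iff_of_pos_right (by positivity)]
  nlinarith [(Nat.cast_nonneg d : (0 : ℝ) ≤ d)]

theorem fractional_helly_general (d : ℕ) (α : ℝ) (hα : α ∈ Set.Ioo (0 : ℝ) 1) :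
    ∃ β : ℝ, β ∈ Set.Ioo (0 : ℝ) 1 ∧
      ∀ n : ℕ, d + 1 < n →
        ∀ F : Fin n → Set (EuclideanSpace ℝ (Fin d)),
          (∀ i, Convex ℝ (F i)) →
          α * (n.choose (d + 1) : ℝ) ≤
            ((((Finset.univ : Finset (Fin n)).powersetCard (d + 1)).filter
              fun I => (⋂ i ∈ I, F i).Nonempty).card : ℝ) →
          ∃ I : Finset (Fin n), β * (n : ℝ) ≤ (I.card : ℝ) ∧ (⋂ i ∈ I, F i).Nonempty := by
  obtain ⟨hα0, hα1⟩ := hα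
  refine ⟨α / (d + 1), ⟨by positivity, (div_lt_one (by positivity)).2 (by linarith)⟩, ?_⟩
  intro n hn F hF hG
  set G := (univ.powersetCard (d + 1)).filter fun I => (⋂ i ∈ I, F i).Nonempty
  have hGD : ∀ D ∈ G, #D = d + 1 ∧ (⋂ i ∈ D, F i).Nonempty := fun D hD => by
    simpa [G, mem_powersetCard] using hD
  have hGne : G.Nonempty := card_pos.1 <| by
    exact_mod_cast (mul_pos hα0 (by exact_mod_cast Nat.choose_pos hn.le)).trans_le hG
  obtain ⟨C, hC, hCG⟩ :=
    exists_isCompact_convex_subset_biInter_nonempty hF G fun D hD => (hGD D hD).2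
  obtain ⟨I, hI, x, hx⟩ :=
    exists_le_card_biInter_nonempty_of_isCompact finrank_euclideanSpace_fin.le
      (fun i => (hC i).1) (fun i => (hC i).2.1) hGne fun D hD => ⟨(hGD D hD).1, hCG D hD⟩
  refine ⟨I, ?_, x, Set.biInter_mono subset_rfl (fun i _ => (hC i).2.2) hx⟩
  rw [Fintype.card_fin] at hI
  calc α / (d + 1) * n ≤ α * n.choose (d + 1) / n.choose d + d :=
        div_succ_mul_le_mul_choose_succ_div_choose_add (by omega) hα1.le
    _ ≤ #G / n.choose d + d := by gcongr
    _ ≤ #I := hI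

theorem fractional_helly (d : ℕ) (hd : 1 ≤ d) (α : ℝ) (hα : α ∈ Set.Ioo (0 : ℝ) 1) :
    ∃ β : ℝ, β ∈ Set.Ioo (0 : ℝ) 1 ∧
      ∀ n : ℕ, d + 1 < n →
        ∀ F : Fin n → Set (EuclideanSpace ℝ (Fin d)),
          (∀ i, Convex ℝ (F i)) →
          α * (n.choose (d + 1) : ℝ) ≤
            ((((Finset.univ : Finset (Fin n)).powersetCard (d + 1)).filter
              fun I => (⋂ i ∈ I, F i).Nonempty).card : ℝ) →
          ∃ I : Finset (Fin n), β * (n : ℝ) ≤ (I.card : ℝ) ∧ (⋂ i ∈ I, F i).Nonempty :=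
  fractional_helly_general d α hα
end

section
/- Let F be a finite family of convex sets in ℝ^d, and let H be the (d+1)-uniform hypergraph on vertex set F whose edges are the (d+1)-element subfamilies of F with nonempty intersection. Then H does not contain a complete (d+1)-tuple of missing edges; that is, there do not exist pairwise disjoint (d+1)-element subfamilies τ₁, …, τ_{d+1} ⊆ F, each with empty intersection, such that for every choice K₁ ∈ τ₁, …, K_{d+1} ∈ τ_{d+1} the sets K₁, …, K_{d+1} have nonempty intersection. -/
/-!
A complete tuple of missing edges would contradict the colourful Helly theorem of Lovász, with
the `τ i` as colour classes.

Replacing each set by the convex hull of the witness points it contains, the sets may be assumed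
compact. To each colourful selection attach the point of minimal norm in its intersection, and take
a selection `f` for which this norm is largest, with point `v`. If no colour class had a common
point, each class `i` would contain a set missing `v`; swapping it into `f` yields a point `u i`
with `‖u i‖ ≤ ‖v‖` and `u i ≠ v`, hence in the open half-space `⟪v, ·⟫ < ‖v‖²`. Helly's theorem
for the `d + 1` sets of `f` together with this half-space then gives a point of `⋂ i, f i` in the
half-space, contradicting the variational characterisation of `v` as the minimal-norm point.
-/

open Module RealInnerProductSpace

section InnerProductSpace

variable {E : Type*} [NormedAddCommGroup E] [InnerProductSpace ℝ E]

theorem real_inner_lt_norm_sq_of_norm_le_of_ne {x y : E} (hyx : ‖y‖ ≤ ‖x‖) (hne : y ≠ x) :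
    ⟪x, y⟫ < ‖x‖ ^ 2 := by
  have hpos : 0 < ‖x - y‖ ^ 2 := by
    have := norm_pos_iff.2 (sub_ne_zero.2 hne.symm)
    positivity
  rw [norm_sub_sq_real] at hpos
  nlinarith [norm_nonneg y]

theorem Convex.norm_sq_le_real_inner_of_isMinOn {K : Set E} (hK : Convex ℝ K) {v w : E}
    (hv : v ∈ K) (hmin : IsMinOn norm K v) (hw : w ∈ K) : ‖v‖ ^ 2 ≤ ⟪v, w⟫ := by
  have hinf : ‖0 - v‖ = ⨅ w : K, ‖0 - (w : E)‖ := by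
    simpa only [zero_sub, norm_neg] using (hmin.iInf_eq hv).symm
  have := (norm_eq_iInf_iff_real_inner_le_zero hK hv).1 hinf w hw
  rw [zero_sub, inner_neg_left, inner_sub_right, real_inner_self_eq_norm_sq] at this
  linarith

end InnerProductSpace

theorem Convex.inter_iInter_nonempty_of_forall_ne {ι 𝕜 E : Type*} [Field 𝕜] [LinearOrder 𝕜]
    [IsStrictOrderedRing 𝕜] [AddCommGroup E] [Module 𝕜 E] [FiniteDimensional 𝕜 E] [Fintype ι]
    (hcard : finrank 𝕜 E < Fintype.card ι) {W : ι → Set E} {S : Set E}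
    (hW : ∀ i, Convex 𝕜 (W i)) (hS : Convex 𝕜 S) (hW₀ : (⋂ i, W i).Nonempty)
    (hSW : ∀ i, (S ∩ ⋂ (j) (_ : j ≠ i), W j).Nonempty) : (S ∩ ⋂ i, W i).Nonempty := by
  let G : Option ι → Set E := fun o => o.elim S W
  have hG : ∀ o₀, ∃ x, ∀ o ≠ o₀, x ∈ G o := by
    rintro (_ | i)
    · obtain ⟨x, hx⟩ := hW₀
      exact ⟨x, fun o ho => by
        obtain ⟨j, rfl⟩ := Option.ne_none_iff_exists'.1 ho
        exact Set.mem_iInter.1 hx j⟩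
    · obtain ⟨x, hxS, hxW⟩ := hSW i
      refine ⟨x, fun o ho => ?_⟩
      cases o with
      | none => exact hxS
      | some j => exact Set.mem_iInter₂.1 hxW j (fun h => ho (h ▸ rfl))
  have hinter := Convex.helly_theorem' (s := Finset.univ) (F := G) (𝕜 := 𝕜)
    (by rintro (_ | i) - <;> simp [G, hS, hW]) fun I _ hI => by
      obtain ⟨o₀, -, ho₀⟩ := Finset.exists_mem_notMem_of_card_lt_card
        (s := I) (t := Finset.univ) (by simp only [Finset.card_univ, Fintype.card_option]; omega)
      obtain ⟨x, hx⟩ := hG o₀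
      exact ⟨x, Set.mem_iInter₂.2 fun o ho => hx o (ne_of_mem_of_not_mem ho ho₀)⟩
  simpa [G, Set.iInter_option] using hinter

section ColorfulHelly

variable {ι E : Type*} [Fintype ι] [NormedAddCommGroup E] [InnerProductSpace ℝ E]
  [FiniteDimensional ℝ E] {A : ι → Type*} [∀ i, Finite (A i)] {S : ∀ i, A i → Set E}

theorem colorful_helly_theorem_compact (hcard : finrank ℝ E < Fintype.card ι)
    (hconv : ∀ i a, Convex ℝ (S i a)) (hcomp : ∀ i a, IsCompact (S i a))
    (h : ∀ f : ∀ i, A i, (⋂ i, S i (f i)).Nonempty) : ∃ i, (⋂ a, S i a).Nonempty := by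
  classical
  by_contra! hempty
  have : ∀ i, Nonempty (A i) := fun i => by
    by_contra hA
    simpa [not_nonempty_iff.1 hA] using hempty i
  obtain ⟨i₀⟩ : Nonempty ι := Fintype.card_pos_iff.1 (by omega)
  have hmin : ∀ f : ∀ i, A i, ∃ v ∈ ⋂ i, S i (f i), IsMinOn norm (⋂ i, S i (f i)) v := fun f =>
    ((hcomp i₀ (f i₀)).of_isClosed_subset (isClosed_iInter fun i => (hcomp i (f i)).isClosed)
      (Set.iInter_subset _ i₀)).exists_isMinOn (h f) continuous_norm.continuousOn
  choose v hv hvmin using hmin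
  obtain ⟨f, hf⟩ := Finite.exists_max fun f => ‖v f‖
  have hout : ∀ i, ∃ a, v f ∉ S i a := fun i => by
    by_contra! hin
    exact Set.notMem_empty _ (hempty i ▸ Set.mem_iInter.2 hin)
  choose a ha using hout
  let u i := v (Function.update f i (a i))
  have hu : ∀ i j, u i ∈ S j (Function.update f i (a i) j) := fun i => Set.mem_iInter.1 (hv _)
  have hhalf : ∀ i, ⟪v f, u i⟫ < ‖v f‖ ^ 2 := fun i =>
    real_inner_lt_norm_sq_of_norm_le_of_ne (hf _) fun h =>
      ha i (h ▸ by simpa using hu i i)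
  obtain ⟨z, hzS, hzW⟩ := Convex.inter_iInter_nonempty_of_forall_ne hcard
    (fun i => hconv i (f i)) (convex_halfSpace_lt (innerₛₗ ℝ (v f)).isLinear _)
    (h f) fun i => ⟨u i, hhalf i, Set.mem_iInter₂.2 fun j hj => by simpa [hj] using hu i j⟩
  exact (convex_iInter fun i => hconv i (f i)).norm_sq_le_real_inner_of_isMinOn
    (hv f) (hvmin f) hzW |>.not_gt hzS

theorem colorful_helly_theorem (hcard : finrank ℝ E < Fintype.card ι)
    (hconv : ∀ i a, Convex ℝ (S i a))
    (h : ∀ f : ∀ i, A i, (⋂ i, S i (f i)).Nonempty) : ∃ i, (⋂ a, S i a).Nonempty := by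
  choose p hp using h
  let Q i a := convexHull ℝ (p '' {f | f i = a})
  have hQS : ∀ i a, Q i a ⊆ S i a := fun i a => convexHull_min
    (by rintro _ ⟨f, rfl, rfl⟩; exact Set.mem_iInter.1 (hp f) i) (hconv i a)
  obtain ⟨i, x, hx⟩ := colorful_helly_theorem_compact (S := Q) hcard
    (fun _ _ => convex_convexHull ℝ _)
    (fun _ _ => ((Set.toFinite _).image p).isCompact_convexHull (𝕜 := ℝ))
    fun f => ⟨p f, Set.mem_iInter.2 fun i => subset_convexHull ℝ _ ⟨f, rfl, rfl⟩⟩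
  exact ⟨i, x, Set.mem_iInter.2 fun a => hQS i a (Set.mem_iInter.1 hx a)⟩

end ColorfulHelly

theorem no_complete_tuple_of_convex (d : ℕ)
    (F : Finset (Set (EuclideanSpace ℝ (Fin d))))
    (hconv : ∀ K ∈ F, Convex ℝ K) :
    ¬ ∃ τ : Fin (d + 1) → Finset (Set (EuclideanSpace ℝ (Fin d))),
        (∀ i, τ i ⊆ F ∧ (τ i).card = d + 1 ∧ (⋂ K ∈ (τ i), K) = ∅) ∧
        (∀ i j, i ≠ j → Disjoint (τ i) (τ j)) ∧
        (∀ t : Fin (d + 1) → Set (EuclideanSpace ℝ (Fin d)),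
          (∀ i, t i ∈ τ i) → (⋂ i, t i).Nonempty) := by
  rintro ⟨τ, hτ, -, hcol⟩
  obtain ⟨i, hi⟩ := colorful_helly_theorem (E := EuclideanSpace ℝ (Fin d)) (A := fun i => τ i)
    (S := fun _ K => K) (by simp) (fun i K => hconv K ((hτ i).1 K.2))
    fun f => hcol (fun i => f i) fun i => (f i).2
  simp [Set.iInter_subtype, (hτ i).2.2] at hi
end
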